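/- arXiv:0905.2576 — 2 statements merged into one kernel-verified Lean document; each statement's English description precedes it below -/
import Mathlib

section
/- Let X be a continuum. A pair {c,d} of distinct non-cut points is a cut pair separating A from B if and only if there exist subcontinua Y, Z of X such that A ⊆ Y − {c,d}, B ⊆ Z − {c,d}, Y ∪ Z = X, and Y ∩ Z = {c,d}. -/
open Set

section Defs

variable {X : Type*} [TopologicalSpace X]

/-- `U` is relatively open in the subspace `X - C`. -/
def RelOpen (C U : Set X) : Prop := ∃ O : Set X, IsOpen O ∧ U = O ∩ Cᶜ

/-- `U, V` form a disconnection of `X - C` into two nonempty relatively open sets. -/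
def SepPair (C U V : Set X) : Prop :=
  RelOpen C U ∧ RelOpen C V ∧ Disjoint U V ∧ U ∪ V = Cᶜ ∧ U.Nonempty ∧ V.Nonempty

/-- `C` separates `A` from `B`. -/
def Separates (C A B : Set X) : Prop := ∃ U V : Set X, SepPair C U V ∧ A ⊆ U ∧ B ⊆ V

/-- `C` separates `X`, i.e. `X - C` is disconnected. -/
def Cuts (C : Set X) : Prop := ∃ U V : Set X, SepPair C U V

def CutPoint (c : X) : Prop := Cuts ({c} : Set X)

def CutPair (c d : X) : Prop := c ≠ d ∧ ¬CutPoint c ∧ ¬CutPoint d ∧ Cuts ({c, d} : Set X)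

def IsSubcontinuum (Y : Set X) : Prop := IsCompact Y ∧ IsConnected Y

/-- A nondegenerate set no two of whose points are separated by a cut pair. -/
def InsepSet (A : Set X) : Prop :=
  A.Nontrivial ∧ ∀ c d : X, CutPair c d → ∀ a ∈ A, ∀ b ∈ A,
    ¬Separates ({c, d} : Set X) {a} {b}

def MaxInsep (A : Set X) : Prop := InsepSet A ∧ ∀ B : Set X, InsepSet B → A ⊆ B → B = A

def InsepCutPair (a b : X) : Prop := CutPair a b ∧ InsepSet ({a, b} : Set X)

/-- A cyclic decomposition of `X` by the points `x 0, …, x (n-1)` (cyclically indexed),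
into subcontinua `M i`, consecutive ones meeting in a single point. -/
def CyclicDecomp (n : ℕ) (x : ZMod n → X) (M : ZMod n → Set X) : Prop :=
  2 < n ∧ Function.Injective x ∧
  (∀ i, IsSubcontinuum (M i)) ∧
  (∀ i, M i ∩ M (i + 1) = {x (i + 1)}) ∧
  (∀ i j, i ≠ j → j ≠ i + 1 → i ≠ j + 1 → M i ∩ M j = ∅) ∧
  (⋃ i, M i) = univ

/-- A finite set is cyclic if it is a cut pair, or admits a cyclic decomposition. -/
def CyclicFinset (S : Set X) : Prop :=
  (∃ a b : X, CutPair a b ∧ S = {a, b}) ∨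
  (∃ n : ℕ, ∃ (x : ZMod n → X) (M : ZMod n → Set X), CyclicDecomp n x M ∧ S = Set.range x)

/-- A set (with more than one point) is cyclic if every finite subset with more
than one element is cyclic. -/
def CyclicSet (S : Set X) : Prop :=
  ∀ A : Finset X, ↑A ⊆ S → 1 < A.card → CyclicFinset (↑A : Set X)

/-- A necklace: a maximal cyclic subset with more than two elements. -/
def Necklace (S : Set X) : Prop :=
  CyclicSet S ∧ (∃ a ∈ S, ∃ b ∈ S, ∃ c ∈ S, a ≠ b ∧ a ≠ c ∧ b ≠ c) ∧
  ∀ S' : Set X, CyclicSet S' → S ⊆ S' → S' = S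

/-- Membership in the collection `R`: necklaces, maximal inseparable sets,
and inseparable cut pairs. -/
def InR (S : Set X) : Prop :=
  Necklace S ∨ MaxInsep S ∨ ∃ a b : X, InsepCutPair a b ∧ S = {a, b}

/-- `A` has exactly two connected components. -/
def TwoComponents (A : Set X) : Prop :=
  ∃ u ∈ A, ∃ v ∈ A, connectedComponentIn A u ≠ connectedComponentIn A v ∧
    ∀ w ∈ A, connectedComponentIn A w = connectedComponentIn A u ∨
      connectedComponentIn A w = connectedComponentIn A v

/-- `S`-equivalence of points of `X - S`: they lie in the same piece of every
cyclic decomposition of `X` by a finite subset of `S`. -/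
def SEquiv (S : Set X) (y z : X) : Prop :=
  y ∉ S ∧ z ∉ S ∧
  ∀ (n : ℕ) (x : ZMod n → X) (M : ZMod n → Set X),
    CyclicDecomp n x M → Set.range x ⊆ S → ∃ i, y ∈ M i ∧ z ∈ M i

end Defs


/-!
If `U ⊔ V` disconnects `X - {c, d}`, then `Y = U ∪ {c, d}` and `Z = V ∪ {c, d}` are closed
and cover `X`, meeting in `{c, d}`. The only issue is the connectedness of `Y`. Split `Y` by
disjoint closed sets `P ⊔ Q` with `d ∈ P`; attaching `closure V ⊆ V ∪ {c, d}` to `P` splits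
`X - {c}`, which is connected because `c` is not a cut point, so `U ⊆ P`. Likewise the side
containing `c` contains `U`, so everything lies on one side. Conversely `Y - {c, d} = Zᶜ` and
`Z - {c, d} = Yᶜ` are open and disconnect `X - {c, d}`.
-/

section Separation

variable {X : Type*} [TopologicalSpace X]

theorem isPreconnected_compl_of_not_cuts {C : Set X} (hC : ¬Cuts C) : IsPreconnected Cᶜ := by
  intro u v hu hv hcover hu' hv'
  by_contra huv
  refine hC ⟨u ∩ Cᶜ, v ∩ Cᶜ, ⟨⟨u, hu, rfl⟩, ⟨v, hv, rfl⟩, ?_, ?_, ?_, ?_⟩⟩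
  · rw [disjoint_left]
    exact fun x hxu hxv => huv ⟨x, hxu.2, hxu.1, hxv.1⟩
  · rw [← union_inter_distrib_right, inter_eq_right.2 hcover]
  · simpa only [inter_comm] using hu'
  · simpa only [inter_comm] using hv'

theorem sepPair_diff_diff {C Y Z : Set X} (hY : IsClosed Y) (hZ : IsClosed Z)
    (hYZ : Y ∪ Z = univ) (hYZC : Y ∩ Z = C) (hYC : (Y \ C).Nonempty)
    (hZC : (Z \ C).Nonempty) : SepPair C (Y \ C) (Z \ C) := by
  have hcompl : ∀ {Y Z : Set X}, Y ∪ Z = univ → Y ∩ Z = C → Y \ C = Zᶜ ∩ Cᶜ := by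
    rintro Y Z hYZ rfl
    ext x
    have := hYZ ▸ mem_univ x
    simp only [mem_sdiff, mem_inter_iff, mem_compl_iff, mem_union] at this ⊢
    tauto
  refine ⟨⟨Zᶜ, hZ.isOpen_compl, hcompl hYZ hYZC⟩,
    ⟨Yᶜ, hY.isOpen_compl, hcompl (union_comm Y Z ▸ hYZ) (inter_comm Y Z ▸ hYZC)⟩,
    ?_, ?_, hYC, hZC⟩
  · rw [disjoint_left]
    rintro x ⟨hxY, hxC⟩ ⟨hxZ, -⟩
    exact hxC (hYZC ▸ ⟨hxY, hxZ⟩)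
  · rw [← union_sdiff_distrib, hYZ, ← compl_eq_univ_sdiff]

namespace SepPair

variable {C U V : Set X}

theorem symm (h : SepPair C U V) : SepPair C V U :=
  let ⟨hU, hV, hUV, hcover, hUne, hVne⟩ := h
  ⟨hV, hU, hUV.symm, union_comm U V ▸ hcover, hVne, hUne⟩

theorem isOpen_left (h : SepPair C U V) (hC : IsClosed C) : IsOpen U := by
  obtain ⟨O, hO, rfl⟩ := h.1
  exact hO.inter hC.isOpen_compl

theorem subset_compl_left (h : SepPair C U V) : U ⊆ Cᶜ :=
  h.2.2.2.1 ▸ subset_union_left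

theorem compl_union_left (h : SepPair C U V) : (U ∪ C)ᶜ = V := by
  obtain ⟨-, -, hUV, hcover, -, -⟩ := h
  ext x
  have hx : x ∈ U ∪ V ↔ x ∉ C := by rw [hcover]; rfl
  have hxUV : x ∈ U → x ∉ V := fun hxU => disjoint_left.1 hUV hxU
  simp only [mem_compl_iff, mem_union] at hx ⊢
  tauto

theorem isClosed_union_left (h : SepPair C U V) (hC : IsClosed C) : IsClosed (U ∪ C) := by
  rw [← isOpen_compl_iff, h.compl_union_left]
  exact h.symm.isOpen_left hC

theorem closure_right_subset (h : SepPair C U V) (hC : IsClosed C) : closure V ⊆ V ∪ C :=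
  (h.symm.isClosed_union_left hC).closure_subset_iff.2 subset_union_left

theorem union_union_union (h : SepPair C U V) : (U ∪ C) ∪ (V ∪ C) = univ := by
  rw [union_union_union_comm, union_self, h.2.2.2.1, compl_union_self]

theorem union_inter_union (h : SepPair C U V) : (U ∪ C) ∩ (V ∪ C) = C := by
  rw [← inter_union_distrib_right, h.2.2.1.inter_eq, empty_union]

variable [T1Space X] {c d : X} {P Q : Set X}

/-- The closed sets `P ∪ closure V` and `Q ∩ (U ∪ {c, d})` split `X - {c}`, and the second one
cannot contain `V`. -/
theorem subset_of_mem (h : SepPair {c, d} U V) (hc : IsPreconnected ({c}ᶜ : Set X))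
    (hP : IsClosed P) (hQ : IsClosed Q) (hPQ : Disjoint P Q) (hcover : U ∪ {c, d} ⊆ P ∪ Q)
    (hdP : d ∈ P) : U ⊆ P := by
  have hC : IsClosed ({c, d} : Set X) := (toFinite _).isClosed
  set Y := U ∪ {c, d}
  have hYV : ∀ x, x ∈ Y ↔ x ∉ V := fun x => by
    rw [← h.compl_union_left, mem_compl_iff, not_not]
  have hsplit : ({c}ᶜ : Set X) ⊆ (P ∪ closure V) ∪ (Q ∩ Y) := by
    intro x _
    by_cases hxV : x ∈ V
    · exact Or.inl (Or.inr (subset_closure hxV))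
    · have hxY := (hYV x).2 hxV
      rcases hcover hxY with hxP | hxQ
      exacts [Or.inl (Or.inl hxP), Or.inr ⟨hxQ, hxY⟩]
  have hdisj : ({c}ᶜ : Set X) ∩ ((P ∪ closure V) ∩ (Q ∩ Y)) = ∅ := by
    refine eq_empty_of_forall_notMem ?_
    rintro x ⟨hxc, hxP | hxV, hxQ, hxY⟩
    · exact disjoint_left.1 hPQ hxP hxQ
    · rcases h.closure_right_subset hC hxV with hxV | rfl | rfl
      exacts [(hYV x).1 hxY hxV, hxc rfl, disjoint_left.1 hPQ hdP hxQ]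
  rcases isPreconnected_iff_subset_of_disjoint_closed.1 hc _ _ (hP.union isClosed_closure)
    (hQ.inter (h.isClosed_union_left hC)) hsplit hdisj with hsub | hsub
  · intro u hu
    rcases hsub (fun huc => h.subset_compl_left hu (.inl huc)) with huP | huV
    · exact huP
    · rcases h.closure_right_subset hC huV with huV | hucd
      exacts [absurd huV (disjoint_left.1 h.2.2.1 hu), absurd hucd (h.subset_compl_left hu)]
  · obtain ⟨v, hv⟩ := h.2.2.2.2.2
    have hvc : v ∈ ({c}ᶜ : Set X) := fun hvc => h.symm.subset_compl_left hv (.inl hvc)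
    exact absurd hv ((hYV v).1 (hsub hvc).2)

theorem isPreconnected_union_pair (h : SepPair {c, d} U V)
    (hc : IsPreconnected ({c}ᶜ : Set X)) (hd : IsPreconnected ({d}ᶜ : Set X)) :
    IsPreconnected (U ∪ {c, d}) := by
  have hC : IsClosed ({c, d} : Set X) := (toFinite _).isClosed
  have h' : SepPair {d, c} U V := pair_comm c d ▸ h
  obtain ⟨u, hu⟩ := h.2.2.2.2.1
  have side : ∀ {P Q : Set X}, IsClosed P → IsClosed Q → Disjoint P Q →
      U ∪ {c, d} ⊆ P ∪ Q → c ∈ P → U ∪ {c, d} ⊆ P := by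
    intro P Q hP hQ hPQ hcover hcP
    have hUP : U ⊆ P := h'.subset_of_mem hd hP hQ hPQ (pair_comm c d ▸ hcover) hcP
    have hdP : d ∈ P := by
      refine (hcover (.inr (.inr rfl))).resolve_right fun hdQ => ?_
      exact disjoint_left.1 hPQ (hUP hu)
        (h.subset_of_mem hc hQ hP hPQ.symm (union_comm P Q ▸ hcover) hdQ hu)
    rintro x (hx | rfl | rfl)
    exacts [hUP hx, hcP, hdP]
  rw [isPreconnected_iff_subset_of_fully_disjoint_closed (h.isClosed_union_left hC)]
  intro P Q hP hQ hcover hPQ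
  rcases hcover (.inr (.inl rfl)) with hcP | hcQ
  · exact .inl (side hP hQ hPQ hcover hcP)
  · exact .inr (side hQ hP hPQ.symm (union_comm P Q ▸ hcover) hcQ)

end SepPair

end Separation

theorem stmt4_general {X : Type*} [MetricSpace X] [CompactSpace X]
    (c d : X) (hcd : c ≠ d) (hc : ¬CutPoint c) (hd : ¬CutPoint d)
    (A B : Set X) (hAne : A.Nonempty) (hBne : B.Nonempty) :
    (CutPair c d ∧ Separates ({c, d} : Set X) A B) ↔
      ∃ Y Z : Set X, IsSubcontinuum Y ∧ IsSubcontinuum Z ∧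
        A ⊆ Y \ {c, d} ∧ B ⊆ Z \ {c, d} ∧ Y ∪ Z = Set.univ ∧ Y ∩ Z = {c, d} := by
  have hC : IsClosed ({c, d} : Set X) := (toFinite _).isClosed
  have hc' := isPreconnected_compl_of_not_cuts hc
  have hd' := isPreconnected_compl_of_not_cuts hd
  constructor
  · rintro ⟨-, U, V, h, hAU, hBV⟩
    have subcontinuum : ∀ {U V : Set X}, SepPair {c, d} U V → IsSubcontinuum (U ∪ {c, d}) :=
      fun h => ⟨(h.isClosed_union_left hC).isCompact,
        ⟨⟨c, .inr (.inl rfl)⟩, h.isPreconnected_union_pair hc' hd'⟩⟩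
    exact ⟨U ∪ {c, d}, V ∪ {c, d}, subcontinuum h, subcontinuum h.symm,
      fun a ha => ⟨.inl (hAU ha), h.subset_compl_left (hAU ha)⟩,
      fun b hb => ⟨.inl (hBV hb), h.symm.subset_compl_left (hBV hb)⟩,
      h.union_union_union, h.union_inter_union⟩
  · rintro ⟨Y, Z, hY, hZ, hAY, hBZ, hYZ, hYZcd⟩
    have h := sepPair_diff_diff hY.1.isClosed hZ.1.isClosed hYZ hYZcd
      (hAne.mono hAY) (hBne.mono hBZ)
    exact ⟨⟨hcd, hc, hd, _, _, h⟩, _, _, h, hAY, hBZ⟩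

theorem stmt4 {X : Type*} [MetricSpace X] [CompactSpace X] [ConnectedSpace X]
    (c d : X) (hcd : c ≠ d) (hc : ¬CutPoint c) (hd : ¬CutPoint d)
    (A B : Set X) (hAne : A.Nonempty) (hBne : B.Nonempty) :
    (CutPair c d ∧ Separates ({c, d} : Set X) A B) ↔
      ∃ Y Z : Set X, IsSubcontinuum Y ∧ IsSubcontinuum Z ∧
        A ⊆ Y \ {c, d} ∧ B ⊆ Z \ {c, d} ∧ Y ∪ Z = Set.univ ∧ Y ∩ Z = {c, d} :=
  stmt4_general c d hcd hc hd A B hAne hBne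
end

section
/- Let X be a continuum without cut points, and let R denote the collection of all necklaces, all maximal inseparable subsets, and all inseparable cut pairs of X. If S, T ∈ R are distinct then |S ∩ T| < 3, and if |S ∩ T| = 2 then S ∩ T is an inseparable cut pair. -/
open Set

set_option linter.unusedSectionVars false

section Basics

variable {X : Type*} [MetricSpace X] [CompactSpace X] [ConnectedSpace X]

lemma pair_not_preconnected {u v : X} (h : u ≠ v) :
    ¬ IsPreconnected ({u, v} : Set X) := by
  intro hp
  have hd : (0:ℝ) < dist u v := dist_pos.2 h
  obtain ⟨z, hz, hz1, hz2⟩ := hp (Metric.ball u (dist u v / 2)) (Metric.ball v (dist u v / 2))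
    Metric.isOpen_ball Metric.isOpen_ball
    (by rintro w (rfl|rfl)
        · exact Or.inl (by simp [Metric.mem_ball, hd])
        · exact Or.inr (by simp [Metric.mem_ball, hd]))
    ⟨u, by simp [Metric.mem_ball, hd]⟩ ⟨v, by simp [Metric.mem_ball, hd]⟩
  have h1 := Metric.mem_ball.1 hz1
  have h2 := Metric.mem_ball.1 hz2
  have : dist u v ≤ dist u z + dist z v := dist_triangle u z v
  rw [dist_comm u z] at this
  linarith

lemma exists_third_point {K : Set X} (hK : IsPreconnected K) {u v : X}
    (hu : u ∈ K) (hv : v ∈ K) (huv : u ≠ v) : ∃ z ∈ K, z ≠ u ∧ z ≠ v := by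
  by_contra h
  push_neg at h
  have hsub : K ⊆ {u, v} := by
    intro z hz
    by_cases h1 : z = u
    · exact Or.inl h1
    · exact Or.inr (h z hz h1)
  have : K = {u, v} := Subset.antisymm hsub (by rintro z (rfl|rfl) <;> assumption)
  exact pair_not_preconnected huv (this ▸ hK)

lemma pair_eq_of_mem {a b p q : X} (hab : a ≠ b) (ha : a ∈ ({p, q} : Set X))
    (hb : b ∈ ({p, q} : Set X)) : ({p, q} : Set X) = {a, b} := by
  rcases ha with rfl|rfl <;> rcases hb with rfl|rfl
  · exact absurd rfl hab
  · rfl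
  · exact Set.pair_comm _ _
  · exact absurd rfl hab

end Basics

section SepBasics

variable {X : Type*} [MetricSpace X] [CompactSpace X] [ConnectedSpace X]

lemma SepPair.symm' {C U V : Set X} (h : SepPair C U V) : SepPair C V U :=
  ⟨h.2.1, h.1, h.2.2.1.symm, by rw [union_comm]; exact h.2.2.2.1, h.2.2.2.2.2, h.2.2.2.2.1⟩

lemma SepPair.open_left {C U V : Set X} (hC : IsClosed C) (h : SepPair C U V) :
    IsOpen U := by
  obtain ⟨O, hO, hU⟩ := h.1
  rw [hU]; exact hO.inter hC.isOpen_compl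

lemma SepPair.open_right {C U V : Set X} (hC : IsClosed C) (h : SepPair C U V) :
    IsOpen V := (h.symm').open_left hC

lemma SepPair.subset_left {C U V : Set X} (h : SepPair C U V) : U ⊆ Cᶜ :=
  h.2.2.2.1 ▸ subset_union_left

lemma SepPair.subset_right {C U V : Set X} (h : SepPair C U V) : V ⊆ Cᶜ :=
  h.2.2.2.1 ▸ subset_union_right

lemma SepPair.compl_right {C U V : Set X} (h : SepPair C U V) : Vᶜ = U ∪ C := by
  ext z
  constructor
  · intro hz
    by_cases hzC : z ∈ C
    · exact Or.inr hzC
    · have : z ∈ U ∪ V := h.2.2.2.1.symm ▸ hzC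
      rcases this with h'|h'
      · exact Or.inl h'
      · exact absurd h' hz
  · rintro (hz|hz)
    · exact Set.disjoint_left.1 h.2.2.1 hz
    · intro hzV
      exact (h.subset_right hzV) hz

lemma SepPair.closure_left {C U V : Set X} (hC : IsClosed C) (h : SepPair C U V) :
    closure U ⊆ U ∪ C := by
  rw [← h.compl_right]
  exact closure_minimal (fun z hz hzV => Set.disjoint_left.1 h.2.2.1 hz hzV)
    (h.open_right hC).isClosed_compl

lemma SepPair.closure_right {C U V : Set X} (hC : IsClosed C) (h : SepPair C U V) :
    closure V ⊆ V ∪ C := (h.symm').closure_left hC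

lemma cutPair_of_cuts (hnc : ∀ p : X, ¬CutPoint p) {a b : X} (hab : a ≠ b)
    (h : Cuts ({a, b} : Set X)) : CutPair a b := ⟨hab, hnc a, hnc b, h⟩

lemma CutPair.symm' {a b : X} (h : CutPair a b) : CutPair b a :=
  ⟨h.1.symm, h.2.2.1, h.2.1, by rw [Set.pair_comm]; exact h.2.2.2⟩

lemma InsepCutPair.symm' {a b : X} (h : InsepCutPair a b) : InsepCutPair b a :=
  ⟨h.1.symm', by rw [Set.pair_comm]; exact h.2⟩

lemma sep_self_false {C U V : Set X} {u : X} (hsp : SepPair C U V)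
    (hU : ({u} : Set X) ⊆ U) (hV : ({u} : Set X) ⊆ V) : False :=
  Set.disjoint_left.1 hsp.2.2.1 (hU rfl) (hV rfl)

lemma insep_pair_of {a b : X} (hab : a ≠ b)
    (h : ∀ c d : X, CutPair c d → ¬ Separates ({c, d} : Set X) {a} {b}) :
    InsepSet ({a, b} : Set X) := by
  refine ⟨Set.nontrivial_pair hab, ?_⟩
  rintro c d hcd u hu v hv ⟨U, V, hsp, hU, hV⟩
  rcases hu with rfl|rfl <;> rcases hv with rfl|rfl
  · exact sep_self_false hsp hU hV
  · exact h c d hcd ⟨U, V, hsp, hU, hV⟩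
  · exact h c d hcd ⟨V, U, hsp.symm', hV, hU⟩
  · exact sep_self_false hsp hU hV

end SepBasics
section Bump

lemma bump_space {Y : Type*} [TopologicalSpace Y] [CompactSpace Y] [T2Space Y]
    [PreconnectedSpace Y] {G : Set Y} (hG : IsOpen G) (hGne : G ≠ univ) {q : Y}
    (hq : q ∈ G) : ∃ w ∈ closure (connectedComponentIn G q), w ∉ G := by
  by_contra hcon
  push_neg at hcon
  set P := connectedComponentIn G q with hPdef
  have hclPG : closure P ⊆ G := fun w hw => hcon w hw
  have hqP : q ∈ P := mem_connectedComponentIn hq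
  have hPP : closure P ⊆ P :=
    (isPreconnected_connectedComponentIn.closure).subset_connectedComponentIn
      (subset_closure hqP) hclPG
  have hPclosed : IsClosed P := isClosed_of_closure_subset hPP
  have hPsubG : P ⊆ G := connectedComponentIn_subset G q
  obtain ⟨Vo, hVo, hPV, hclV⟩ := normal_exists_closure_subset hPclosed hG hPsubG
  set Z := closure Vo with hZdef
  have hZcomp : IsCompact Z := isClosed_closure.isCompact
  have hqZ : q ∈ Z := subset_closure (hPV hqP)
  have hPZ : P = connectedComponentIn Z q := by
    apply Subset.antisymm
    · exact isPreconnected_connectedComponentIn.subset_connectedComponentIn hqP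
        (hPV.trans subset_closure)
    · exact isPreconnected_connectedComponentIn.subset_connectedComponentIn
        (mem_connectedComponentIn hqZ) ((connectedComponentIn_subset Z q).trans hclV)
  haveI : CompactSpace Z := isCompact_iff_compactSpace.1 hZcomp
  set q' : Z := ⟨q, hqZ⟩ with hq'def
  have hcomp_eq : connectedComponentIn Z q = Subtype.val '' connectedComponent q' :=
    connectedComponentIn_eq_image hqZ
  have hSB := connectedComponent_eq_iInter_isClopen q'
  have hsub : (⋂ (s : {s : Set Z // IsClopen s ∧ q' ∈ s}), (s : Set Z)) ⊆
      (Subtype.val ⁻¹' Vo : Set Z) := by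
    rw [← hSB]
    intro z hz
    have h1 : (z : Y) ∈ connectedComponentIn Z q := hcomp_eq ▸ ⟨z, hz, rfl⟩
    have h2 : (z : Y) ∈ P := hPZ ▸ h1
    exact hPV h2
  have hcptc : IsCompact ((Subtype.val ⁻¹' Vo : Set Z)ᶜ) :=
    ((hVo.preimage continuous_subtype_val).isClosed_compl).isCompact
  obtain ⟨t, ht⟩ := hcptc.elim_finite_subfamily_closed
    (fun s : {s : Set Z // IsClopen s ∧ q' ∈ s} => (s : Set Z))
    (fun s => s.2.1.1)
    (Set.eq_empty_iff_forall_notMem.2 (fun z hz => hz.1 (hsub hz.2)))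
  set W : Set Z := ⋂ s ∈ t, (s : Set Z) with hWdef
  have hWclopen : IsClopen W := isClopen_biInter_finset (fun s _ => s.2.1)
  have hqW : q' ∈ W := Set.mem_biInter (fun s _ => s.2.2)
  have hWV : W ⊆ (Subtype.val ⁻¹' Vo : Set Z) := by
    intro z hz
    by_contra hzv
    exact Set.eq_empty_iff_forall_notMem.1 ht z ⟨hzv, hz⟩
  -- push W down to Y
  set W' : Set Y := Subtype.val '' W with hW'def
  have hW'V : W' ⊆ Vo := by rintro w ⟨z, hz, rfl⟩; exact hWV hz
  have hW'closed : IsClosed W' :=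
    ((hWclopen.1.isCompact).image continuous_subtype_val).isClosed
  have hW'open : IsOpen W' := by
    obtain ⟨O, hO, hOW⟩ := isOpen_induced_iff.1 hWclopen.2
    have h1 : W' = O ∩ Z := by
      rw [hW'def, ← hOW, Set.image_preimage_eq_inter_range, Subtype.range_coe]
    have h2 : W' = O ∩ Vo := by
      apply Subset.antisymm
      · exact fun w hw => ⟨(h1 ▸ hw).1, hW'V hw⟩
      · intro w hw
        rw [h1]
        exact ⟨hw.1, subset_closure hw.2⟩
    rw [h2]
    exact hO.inter hVo
  rcases isClopen_iff.1 ⟨hW'closed, hW'open⟩ with hE | hU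
  · have : q ∈ W' := ⟨q', hqW, rfl⟩
    rw [hE] at this
    exact this
  · exact hGne (Subset.antisymm (subset_univ G)
      (hU ▸ hW'V |>.trans ((subset_closure.trans hclV))))

/-- Ambient version of boundary bumping for a subcontinuum `K`: the connected
component of `q` in `K ∩ U` has a closure point outside `U`. -/
lemma bump_closure {X : Type*} [MetricSpace X] [CompactSpace X] [ConnectedSpace X]
    {K : Set X} (hKcomp : IsCompact K) (hKconn : IsConnected K)
    {U : Set X} (hU : IsOpen U) {q : X} (hqK : q ∈ K) (hqU : q ∈ U)
    (hne : ¬ K ⊆ U) :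
    ∃ w ∈ closure (connectedComponentIn (K ∩ U) q), w ∉ U := by
  haveI hcs : CompactSpace K := isCompact_iff_compactSpace.1 hKcomp
  haveI hconn : ConnectedSpace K := Subtype.connectedSpace hKconn
  set G : Set K := Subtype.val ⁻¹' U with hGdef
  have hGopen : IsOpen G := hU.preimage continuous_subtype_val
  have hGne : G ≠ univ := by
    intro h
    exact hne (fun k hk => by
      have : (⟨k, hk⟩ : K) ∈ G := h ▸ trivial
      exact this)
  have hqG : (⟨q, hqK⟩ : K) ∈ G := hqU
  obtain ⟨w', hw'cl, hw'G⟩ := bump_space hGopen hGne hqG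
  refine ⟨(w' : X), ?_, hw'G⟩
  have himg : Subtype.val '' (connectedComponentIn G (⟨q, hqK⟩ : K)) ⊆
      connectedComponentIn (K ∩ U) q := by
    apply IsPreconnected.subset_connectedComponentIn
    · exact isPreconnected_connectedComponentIn.image _ continuous_subtype_val.continuousOn
    · exact ⟨⟨q, hqK⟩, mem_connectedComponentIn hqG, rfl⟩
    · rintro w ⟨z, hz, rfl⟩
      exact ⟨z.2, connectedComponentIn_subset G _ hz⟩
  have h1 : (w' : X) ∈ Subtype.val '' closure (connectedComponentIn G (⟨q, hqK⟩ : K)) :=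
    ⟨w', hw'cl, rfl⟩
  have h2 := image_closure_subset_closure_image
    (continuous_subtype_val (p := fun x => x ∈ K)) h1
  exact closure_mono himg h2

end Bump
section ZModAux

lemma zmod_cast_inj {n a b : ℕ} (ha : a < n) (hb : b < n)
    (h : (a : ZMod n) = (b : ZMod n)) : a = b := by
  have := congrArg ZMod.val h
  rwa [ZMod.val_cast_of_lt ha, ZMod.val_cast_of_lt hb] at this

lemma zmod_one_ne_zero {n : ℕ} (hn : 2 < n) : (1 : ZMod n) ≠ 0 := by
  intro h
  have : ((1:ℕ) : ZMod n) = ((0:ℕ) : ZMod n) := by push_cast; exact h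
  have := zmod_cast_inj (by omega) (by omega) this
  omega

lemma zmod_add_one_ne {n : ℕ} (hn : 2 < n) (i : ZMod n) : i + 1 ≠ i := by
  intro h
  have : (1 : ZMod n) = 0 := by
    have := congrArg (· - i) h
    simpa [add_comm, add_sub_cancel_right] using this
  exact zmod_one_ne_zero hn this

end ZModAux

namespace CyclicDecomp

variable {X : Type*} [MetricSpace X] [CompactSpace X] [ConnectedSpace X]
variable {n : ℕ} {x : ZMod n → X} {M : ZMod n → Set X}

lemma big (hD : CyclicDecomp n x M) : 2 < n := hD.1
lemma inj (hD : CyclicDecomp n x M) : Function.Injective x := hD.2.1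
lemma cpt (hD : CyclicDecomp n x M) (i : ZMod n) : IsCompact (M i) := (hD.2.2.1 i).1
lemma conn (hD : CyclicDecomp n x M) (i : ZMod n) : IsConnected (M i) := (hD.2.2.1 i).2
lemma adj (hD : CyclicDecomp n x M) (i : ZMod n) : M i ∩ M (i+1) = {x (i+1)} :=
  hD.2.2.2.1 i
lemma disj (hD : CyclicDecomp n x M) :
    ∀ i j, i ≠ j → j ≠ i + 1 → i ≠ j + 1 → M i ∩ M j = ∅ := hD.2.2.2.2.1
lemma cover (hD : CyclicDecomp n x M) : (⋃ i, M i) = univ := hD.2.2.2.2.2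
lemma nz (hD : CyclicDecomp n x M) : NeZero n := ⟨by have := hD.1; omega⟩
lemma closed (hD : CyclicDecomp n x M) (i : ZMod n) : IsClosed (M i) :=
  (hD.cpt i).isClosed

lemma mem_right (hD : CyclicDecomp n x M) (i : ZMod n) : x (i+1) ∈ M i := by
  have h : x (i+1) ∈ M i ∩ M (i+1) := by rw [hD.adj i]; rfl
  exact h.1

lemma mem_self (hD : CyclicDecomp n x M) (i : ZMod n) : x i ∈ M i := by
  have h : x ((i-1)+1) ∈ M ((i-1)+1) := by
    have h2 : x ((i-1)+1) ∈ M (i-1) ∩ M ((i-1)+1) := by rw [hD.adj (i-1)]; rfl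
    exact h2.2
  simpa using h

lemma mem_prev (hD : CyclicDecomp n x M) (i : ZMod n) : x i ∈ M (i-1) := by
  have h : x ((i-1)+1) ∈ M (i-1) := hD.mem_right (i-1)
  simpa using h

lemma inter_subset_endpoints (hD : CyclicDecomp n x M) {i j : ZMod n} (h : j ≠ i) :
    M i ∩ M j ⊆ {x i, x (i+1)} := by
  by_cases h1 : j = i + 1
  · subst h1; rw [hD.adj i]; exact fun z hz => Or.inr hz
  · by_cases h2 : i = j + 1
    · intro z hz
      have : z ∈ M j ∩ M (j+1) := ⟨hz.2, h2 ▸ hz.1⟩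
      rw [hD.adj j] at this
      exact Or.inl (by rw [← h2] at this; exact this)
    · rw [hD.disj i j (Ne.symm h) h1 h2]; exact empty_subset _

lemma mem_piece_iff (hD : CyclicDecomp n x M) {i j : ZMod n} :
    x j ∈ M i ↔ j = i ∨ j = i + 1 := by
  constructor
  · intro h
    by_contra hcon
    push_neg at hcon
    have hji : j ≠ i := hcon.1
    have hxj : x j ∈ M i ∩ M j := ⟨h, hD.mem_self j⟩
    have := hD.inter_subset_endpoints hji hxj
    rcases this with h'|h'
    · exact hji (hD.inj h')
    · exact hcon.2 (hD.inj h')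
  · rintro (rfl|rfl)
    · exact hD.mem_self _
    · exact hD.mem_right _

/-- The "interior" of a piece is the complement of the union of the other pieces. -/
lemma io_eq (hD : CyclicDecomp n x M) (i : ZMod n) :
    M i \ {x i, x (i+1)} = (⋃ j ∈ {j | j ≠ i}, M j)ᶜ := by
  ext z
  simp only [Set.mem_diff, Set.mem_compl_iff, Set.mem_iUnion, Set.mem_setOf_eq,
    not_exists]
  constructor
  · rintro ⟨hzM, hz⟩ j hj
    intro hzj
    have := hD.inter_subset_endpoints hj ⟨hzM, hzj⟩
    exact hz this
  · intro h
    have hzM : z ∈ M i := by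
      have : z ∈ ⋃ j, M j := hD.cover ▸ trivial
      obtain ⟨j, hj⟩ := Set.mem_iUnion.1 this
      by_cases hji : j = i
      · exact hji ▸ hj
      · exact absurd hj (h j hji)
    refine ⟨hzM, ?_⟩
    rintro (rfl|rfl)
    · exact h (i-1) (by
        intro hcon
        have : (1 : ZMod n) = 0 := by
          have h2 : i - (i - 1) = i - i := congrArg (fun w => i - w) hcon
          rw [sub_sub_cancel, sub_self] at h2
          exact h2
        exact zmod_one_ne_zero hD.big this) (hD.mem_prev i)
    · exact h (i+1) (zmod_add_one_ne hD.big i) (hD.mem_self (i+1))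

lemma io_open (hD : CyclicDecomp n x M) (i : ZMod n) :
    IsOpen (M i \ {x i, x (i+1)}) := by
  haveI := hD.nz
  rw [hD.io_eq i]
  exact (Set.Finite.isClosed_biUnion (Set.toFinite _)
    (fun j _ => hD.closed j)).isOpen_compl

lemma not_mem_io (hD : CyclicDecomp n x M) (i j : ZMod n) :
    x j ∉ M i \ {x i, x (i+1)} := by
  rintro ⟨hmem, hne⟩
  rcases hD.mem_piece_iff.1 hmem with rfl|rfl
  · exact hne (Or.inl rfl)
  · exact hne (Or.inr rfl)

/-- connectivity of a consecutive chain of pieces -/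
lemma chain_conn (hD : CyclicDecomp n x M) (i₀ : ZMod n) :
    ∀ k : ℕ, 1 ≤ k → IsConnected (⋃ l ∈ Finset.range k, M (i₀ + (l : ZMod n))) := by
  intro k
  induction k with
  | zero => omega
  | succ k ih =>
    intro _
    by_cases hk : k = 0
    · subst hk
      simpa using hD.conn i₀
    · have h1 : 1 ≤ k := by omega
      classical
      rw [Finset.range_add_one, Finset.set_biUnion_insert]
      refine IsConnected.union ?_ (hD.conn _) (ih h1)
      refine ⟨x (i₀ + (k : ZMod n)), hD.mem_self _, ?_⟩
      have harith : (i₀ + ((k-1 : ℕ) : ZMod n)) + 1 = i₀ + (k : ZMod n) := by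
        have : ((k-1 : ℕ) : ZMod n) + 1 = (k : ZMod n) := by
          have : ((k-1)+1 : ℕ) = k := by omega
          rw [← this]; push_cast; ring
        rw [add_assoc, this]
      refine Set.mem_biUnion (Finset.mem_range.2 (by omega : k - 1 < k)) ?_
      rw [← harith]
      exact hD.mem_right _

lemma range_comp_add (x : ZMod n → X) (r : ZMod n) :
    Set.range (fun i => x (i + r)) = Set.range x := by
  ext z
  constructor
  · rintro ⟨i, rfl⟩; exact ⟨i + r, rfl⟩
  · rintro ⟨i, rfl⟩; exact ⟨i - r, by simp⟩

lemma rotate (hD : CyclicDecomp n x M) (r : ZMod n) :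
    CyclicDecomp n (fun i => x (i + r)) (fun i => M (i + r)) := by
  obtain ⟨hn, hinj, hsub, hadj, hdisj, hcov⟩ := hD
  refine ⟨hn, ?_, fun i => hsub _, fun i => ?_, fun i j h1 h2 h3 => ?_, ?_⟩
  · intro i j h
    have := hinj h
    exact add_right_cancel this
  · show M (i + r) ∩ M ((i + 1) + r) = {x ((i + 1) + r)}
    have := hadj (i + r)
    rwa [add_right_comm i r 1] at this
  · show M (i + r) ∩ M (j + r) = ∅
    refine hdisj _ _ (fun h => h1 (add_right_cancel h)) ?_ ?_
    · intro h
      exact h2 (by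
        have : j + r = (i + 1) + r := by rw [h]; ring
        exact add_right_cancel this)
    · intro h
      exact h3 (by
        have : i + r = (j + 1) + r := by rw [h]; ring
        exact add_right_cancel this)
  · rw [← hcov]
    exact (Equiv.addRight r).surjective.iUnion_comp M

end CyclicDecomp
section TriQuad

variable {X : Type*} [MetricSpace X] [CompactSpace X] [ConnectedSpace X]

lemma zmod3_facts :
    (∀ i : ZMod 3, i ≠ i + 1) ∧ (∀ i : ZMod 3, i + 2 ≠ i) ∧
    (∀ i : ZMod 3, i + 2 ≠ i + 1) := by
  refine ⟨?_, ?_, ?_⟩ <;> decide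

/-- In a 3-piece decomposition, removing two adjacent points separates the interior of
the piece between them from the rest. -/
lemma tri_seppair {x : ZMod 3 → X} {M : ZMod 3 → Set X} (hD : CyclicDecomp 3 x M)
    (i : ZMod 3) :
    SepPair {x i, x (i+1)} (M i \ {x i, x (i+1)}) (M i)ᶜ := by
  have hCsub : ({x i, x (i+1)} : Set X) ⊆ M i := by
    rintro z (rfl|rfl)
    · exact hD.mem_self i
    · exact hD.mem_right i
  refine ⟨⟨M i \ {x i, x (i+1)}, hD.io_open i, ?_⟩,
          ⟨(M i)ᶜ, (hD.closed i).isOpen_compl, ?_⟩, ?_, ?_, ?_, ?_⟩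
  · rw [Set.inter_eq_self_of_subset_left]
    intro z hz
    exact hz.2
  · rw [Set.inter_eq_self_of_subset_left]
    intro z hz hzc
    exact hz (hCsub hzc)
  · rw [Set.disjoint_left]
    intro z hz hz2
    exact hz2 hz.1
  · apply Subset.antisymm
    · rintro z (hz|hz)
      · exact fun h => hz.2 h
      · exact fun h => hz (hCsub h)
    · intro z hz
      by_cases hzM : z ∈ M i
      · exact Or.inl ⟨hzM, hz⟩
      · exact Or.inr hzM
  · obtain ⟨w, hw, hw1, hw2⟩ := exists_third_point (hD.conn i).2 (hD.mem_self i)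
      (hD.mem_right i) (hD.inj.ne (zmod3_facts.1 i))
    exact ⟨w, hw, by rintro (rfl|rfl) <;> [exact hw1 rfl; exact hw2 rfl]⟩
  · refine ⟨x (i+2), ?_⟩
    intro h
    rcases hD.mem_piece_iff.1 h with h'|h'
    · exact absurd h' (zmod3_facts.2.1 i)
    · exact absurd h' (zmod3_facts.2.2 i)

lemma zmod4_facts :
    (∀ i : ZMod 4, i ≠ i + 2) ∧ (∀ i : ZMod 4, i + 2 ≠ i + 1) ∧
    (∀ i : ZMod 4, i ≠ i + 2 + 1) ∧ (∀ i : ZMod 4, i + 1 ≠ i) ∧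
    (∀ i : ZMod 4, i + 1 ≠ i + 2) ∧ (∀ i : ZMod 4, i + 3 ≠ i) ∧
    (∀ i : ZMod 4, i + 3 ≠ i + 2) ∧ (∀ i : ZMod 4, i + 3 + 1 = i) ∧
    (∀ i : ZMod 4, i + 1 ≠ i + 3) ∧ (∀ i : ZMod 4, i + 1 ≠ i + 3 + 1) ∧
    (∀ i : ZMod 4, i + 3 ≠ i + 1 + 1) ∧
    (∀ i j : ZMod 4, j = i ∨ j = i + 1 ∨ j = i + 2 ∨ j = i + 3) := by
  refine ⟨?_, ?_, ?_, ?_, ?_, ?_, ?_, ?_, ?_, ?_, ?_, ?_⟩ <;> decide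

/-- In a 4-piece decomposition, the two "opposite" points `y i, y (i+2)` separate
`y (i+1)` from `y (i+3)`. -/
lemma quad_seppair {y : ZMod 4 → X} {N : ZMod 4 → Set X} (hD : CyclicDecomp 4 y N)
    (i : ZMod 4) :
    SepPair {y i, y (i+2)} ((N i ∪ N (i+1)) \ {y i, y (i+2)})
      ((N (i+2) ∪ N (i+3)) \ {y i, y (i+2)}) ∧
    y (i+1) ∈ (N i ∪ N (i+1)) \ {y i, y (i+2)} ∧
    y (i+3) ∈ (N (i+2) ∪ N (i+3)) \ {y i, y (i+2)} := by
  obtain ⟨f1, f2, f3, f4, f5, f6, f7, f8, f9, f10, f11, f12⟩ := zmod4_facts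
  set C : Set X := {y i, y (i+2)} with hC
  -- pairwise intersections
  have h02 : N i ∩ N (i+2) = ∅ := hD.disj i (i+2) (f1 i) (f2 i) (f3 i)
  have h13 : N (i+1) ∩ N (i+3) = ∅ :=
    hD.disj (i+1) (i+3) (f9 i) (f11 i) (f10 i)
  have h03 : N i ∩ N (i+3) ⊆ C := by
    intro z hz
    have : z ∈ N (i+3) ∩ N (i+3+1) := ⟨hz.2, (f8 i).symm ▸ hz.1⟩
    rw [hD.adj (i+3)] at this
    rw [f8 i] at this
    exact Or.inl this
  have h12 : N (i+1) ∩ N (i+2) ⊆ C := by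
    intro z hz
    have : z ∈ N (i+1) ∩ N (i+1+1) := ⟨hz.1, by rw [show i+1+1 = i+2 by ring]; exact hz.2⟩
    rw [hD.adj (i+1)] at this
    rw [show i+1+1 = i+2 by ring] at this
    exact Or.inr this
  have hinterC : (N i ∪ N (i+1)) ∩ (N (i+2) ∪ N (i+3)) ⊆ C := by
    rintro z ⟨hz1|hz1, hz2|hz2⟩
    · exact absurd (show z ∈ N i ∩ N (i+2) from ⟨hz1, hz2⟩)
        (Set.eq_empty_iff_forall_notMem.1 h02 z)
    · exact h03 ⟨hz1, hz2⟩
    · exact h12 ⟨hz1, hz2⟩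
    · exact absurd (show z ∈ N (i+1) ∩ N (i+3) from ⟨hz1, hz2⟩)
        (Set.eq_empty_iff_forall_notMem.1 h13 z)
  have hcov : ∀ z : X, z ∈ N i ∪ N (i+1) ∨ z ∈ N (i+2) ∪ N (i+3) := by
    intro z
    have : z ∈ ⋃ j, N j := hD.cover ▸ trivial
    obtain ⟨j, hj⟩ := Set.mem_iUnion.1 this
    rcases f12 i j with rfl|rfl|rfl|rfl
    · exact Or.inl (Or.inl hj)
    · exact Or.inl (Or.inr hj)
    · exact Or.inr (Or.inl hj)
    · exact Or.inr (Or.inr hj)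
  have hCsub2 : C ⊆ N (i+2) ∪ N (i+3) := by
    rintro z (rfl|rfl)
    · refine Or.inr ?_
      have := hD.mem_right (i+3)
      rwa [f8 i] at this
    · exact Or.inl (hD.mem_self (i+2))
  have hCsub1 : C ⊆ N i ∪ N (i+1) := by
    rintro z (rfl|rfl)
    · exact Or.inl (hD.mem_self i)
    · exact Or.inr (by rw [show i+2 = i+1+1 by ring]; exact hD.mem_right (i+1))
  have hUopen : (N i ∪ N (i+1)) \ C = (N (i+2) ∪ N (i+3))ᶜ := by
    apply Subset.antisymm
    · rintro z ⟨hz, hzC⟩ hz2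
      exact hzC (hinterC ⟨hz, hz2⟩)
    · intro z hz
      rcases hcov z with h|h
      · exact ⟨h, fun hc => hz (hCsub2 hc)⟩
      · exact absurd h hz
  have hVopen : (N (i+2) ∪ N (i+3)) \ C = (N i ∪ N (i+1))ᶜ := by
    apply Subset.antisymm
    · rintro z ⟨hz, hzC⟩ hz2
      exact hzC (hinterC ⟨hz2, hz⟩)
    · intro z hz
      rcases hcov z with h|h
      · exact absurd h hz
      · exact ⟨h, fun hc => hz (hCsub1 hc)⟩
  have hmem1 : y (i+1) ∈ (N i ∪ N (i+1)) \ C := by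
    refine ⟨Or.inr (hD.mem_self (i+1)), ?_⟩
    rintro (h|h)
    · exact f4 i (hD.inj h)
    · exact f5 i (hD.inj h)
  have hmem3 : y (i+3) ∈ (N (i+2) ∪ N (i+3)) \ C := by
    refine ⟨Or.inr (hD.mem_self (i+3)), ?_⟩
    rintro (h|h)
    · exact f6 i (hD.inj h)
    · exact f7 i (hD.inj h)
  refine ⟨⟨⟨(N (i+2) ∪ N (i+3))ᶜ, ((hD.closed (i+2)).union (hD.closed (i+3))).isOpen_compl, ?_⟩,
          ⟨(N i ∪ N (i+1))ᶜ, ((hD.closed i).union (hD.closed (i+1))).isOpen_compl, ?_⟩,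
          ?_, ?_, ⟨_, hmem1⟩, ⟨_, hmem3⟩⟩, hmem1, hmem3⟩
  · rw [hUopen, Set.inter_eq_self_of_subset_left]
    intro z hz hzC
    exact hz (hCsub2 hzC)
  · rw [hVopen, Set.inter_eq_self_of_subset_left]
    intro z hz hzC
    exact hz (hCsub1 hzC)
  · rw [Set.disjoint_left]
    rintro z hz hz2
    exact hz.2 (hinterC ⟨hz.1, hz2.1⟩)
  · apply Subset.antisymm
    · rintro z (hz|hz) <;> exact hz.2
    · intro z hz
      rcases hcov z with h|h
      · exact Or.inl ⟨h, hz⟩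
      · exact Or.inr ⟨h, hz⟩
  
end TriQuad
section Drop

variable {X : Type*} [MetricSpace X] [CompactSpace X] [ConnectedSpace X]

lemma zmod_cast_ne {n a b : ℕ} (ha : a < n) (hb : b < n) (h : a ≠ b) :
    (a : ZMod n) ≠ (b : ZMod n) := fun hc => h (zmod_cast_inj ha hb hc)

lemma zmod_cast_add_one {n a : ℕ} : ((a : ℕ) : ZMod n) + 1 = ((a + 1 : ℕ) : ZMod n) := by
  push_cast; ring

namespace CyclicDecomp

variable {n : ℕ} {x : ZMod n → X} {M : ZMod n → Set X}

lemma adjn (hD : CyclicDecomp n x M) (a : ℕ) :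
    M (a : ZMod n) ∩ M ((a+1 : ℕ) : ZMod n) = {x ((a+1 : ℕ) : ZMod n)} := by
  have := hD.adj (a : ZMod n)
  rwa [zmod_cast_add_one] at this

lemma mem_selfn (hD : CyclicDecomp n x M) (a : ℕ) : x (a : ZMod n) ∈ M (a : ZMod n) :=
  hD.mem_self _

lemma mem_rightn (hD : CyclicDecomp n x M) (a : ℕ) :
    x ((a+1 : ℕ) : ZMod n) ∈ M (a : ZMod n) := by
  have := hD.mem_right (a : ZMod n)
  rwa [zmod_cast_add_one] at this

lemma succ_cast (hD : CyclicDecomp n x M) {a : ℕ} (h : a + 1 = n) :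
    ((a + 1 : ℕ) : ZMod n) = ((0 : ℕ) : ZMod n) := by
  rw [h, ZMod.natCast_self, Nat.cast_zero]

lemma disjn (hD : CyclicDecomp n x M) (a b : ℕ) (ha : a < n) (hb : b < n)
    (hab : a ≠ b) (h1 : ¬(b = a+1 ∨ (a+1 = n ∧ b = 0)))
    (h2 : ¬(a = b+1 ∨ (b+1 = n ∧ a = 0))) :
    M (a : ZMod n) ∩ M (b : ZMod n) = ∅ := by
  push_neg at h1 h2
  apply hD.disj
  · exact zmod_cast_ne ha hb hab
  · rw [zmod_cast_add_one]
    by_cases hc : a + 1 = n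
    · rw [hD.succ_cast hc]
      exact zmod_cast_ne hb (by omega) (h1.2 hc)
    · exact zmod_cast_ne hb (by omega) h1.1
  · rw [zmod_cast_add_one]
    by_cases hc : b + 1 = n
    · rw [hD.succ_cast hc]
      exact zmod_cast_ne ha (by omega) (h2.2 hc)
    · exact zmod_cast_ne ha (by omega) h2.1

lemma mem_piecen (hD : CyclicDecomp n x M) {a b : ℕ} (ha : a < n) (hb : b < n)
    (h : x (b : ZMod n) ∈ M (a : ZMod n)) : b = a ∨ b = (a+1) % n := by
  rcases hD.mem_piece_iff.1 h with h'|h'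
  · exact Or.inl (zmod_cast_inj hb ha h')
  · rw [zmod_cast_add_one] at h'
    by_cases hc : a + 1 = n
    · rw [hD.succ_cast hc] at h'
      right
      have hb0 : b = 0 := zmod_cast_inj hb (by omega) h'
      rw [hb0, hc, Nat.mod_self]
    · right
      have hb1 : b = a + 1 := zmod_cast_inj hb (by omega) h'
      rw [hb1, Nat.mod_eq_of_lt (by omega)]

/-- Dropping the point `x 0` from a cyclic decomposition with at least 4 points. -/
lemma drop_one (hD : CyclicDecomp n x M) (hn4 : 4 ≤ n) :
    ∃ (x' : ZMod (n-1) → X) (M' : ZMod (n-1) → Set X),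
      CyclicDecomp (n-1) x' M' ∧
      Set.range x' = Set.range x \ {x ((0:ℕ) : ZMod n)} := by
  haveI hnzn : NeZero n := ⟨by omega⟩
  set k := n - 1 with hk
  haveI hnzk : NeZero k := ⟨by omega⟩
  have hvlt : ∀ i : ZMod k, i.val < k := fun i => ZMod.val_lt i
  haveI hf1k : Fact (1 < k) := ⟨by omega⟩
  set x' : ZMod k → X := fun i => x ((i.val + 1 : ℕ) : ZMod n) with hx'
  set M' : ZMod k → Set X := fun i =>
    if i.val = k - 1 then M ((n-1 : ℕ) : ZMod n) ∪ M ((0:ℕ) : ZMod n)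
    else M ((i.val + 1 : ℕ) : ZMod n) with hM'
  -- succ val computation in ZMod k
  have hsv : ∀ i : ZMod k, (i + 1).val = if i.val = k - 1 then 0 else i.val + 1 := by
    intro i
    rw [ZMod.val_add, ZMod.val_one k]
    by_cases h : i.val = k - 1
    · simp [h, Nat.sub_add_cancel (by omega : 1 ≤ k)]
    · have := hvlt i
      rw [if_neg h, Nat.mod_eq_of_lt (by omega)]
  -- glue piece facts
  have hx0glue : x ((0:ℕ) : ZMod n) ∈ M ((n-1 : ℕ) : ZMod n) := by
    have := hD.mem_rightn (n-1)
    rwa [hD.succ_cast (by omega)] at this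
  have hM10 : M ((n-1 : ℕ) : ZMod n) ∩ M ((0:ℕ) : ZMod n) = {x ((0:ℕ) : ZMod n)} := by
    have := hD.adjn (n-1)
    rwa [hD.succ_cast (by omega)] at this
  refine ⟨x', M', ⟨by omega, ?_, ?_, ?_, ?_, ?_⟩, ?_⟩
  · -- injectivity
    intro i j h
    simp only [hx'] at h
    have h2 := zmod_cast_inj (by have := hvlt i; omega) (by have := hvlt j; omega)
      (hD.inj h)
    exact ZMod.val_injective k (by omega)
  · -- subcontinua
    intro i
    simp only [hM']
    by_cases h : i.val = k - 1
    · rw [if_pos h]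
      refine ⟨(hD.cpt _).union (hD.cpt _), ?_⟩
      exact IsConnected.union ⟨x ((0:ℕ) : ZMod n), hx0glue, hD.mem_selfn 0⟩
        (hD.conn _) (hD.conn _)
    · rw [if_neg h]
      exact ⟨hD.cpt _, hD.conn _⟩
  · -- adjacency
    intro i
    have hiv := hvlt i
    show M' i ∩ M' (i+1) = {x' (i+1)}
    by_cases h : i.val = k - 1
    · -- last piece followed by M 1
      have hi1 : (i + 1).val = 0 := by rw [hsv, if_pos h]
      have hi1ne : ¬ (i+1).val = k - 1 := by omega
      have hg1 : M ((n-1:ℕ) : ZMod n) ∩ M ((1:ℕ) : ZMod n) = ∅ :=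
        hD.disjn (n-1) 1 (by omega) (by omega) (by omega) (by omega) (by omega)
      simp only [hM', hx', if_pos h, if_neg hi1ne, hi1]
      rw [Set.union_inter_distrib_right, hg1, Set.empty_union]
      have := hD.adjn 0
      norm_num at this ⊢
      exact this
    · by_cases h2 : i.val = k - 2
      · -- piece before the glue piece
        have hi1 : (i + 1).val = k - 1 := by rw [hsv, if_neg h]; omega
        have hg1 : M ((i.val+1 : ℕ) : ZMod n) ∩ M ((n-1:ℕ) : ZMod n)
            = {x ((n-1:ℕ) : ZMod n)} := by
          have := hD.adjn (n-2)
          rw [show n - 2 + 1 = n - 1 by omega] at this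
          rw [show i.val + 1 = n - 2 by omega]
          exact this
        have hg2 : M ((i.val+1 : ℕ) : ZMod n) ∩ M ((0:ℕ) : ZMod n) = ∅ := by
          rw [show i.val + 1 = n - 2 by omega]
          exact hD.disjn (n-2) 0 (by omega) (by omega) (by omega) (by omega) (by omega)
        simp only [hM', hx', if_neg h, if_pos hi1, hi1]
        rw [Set.inter_union_distrib_left, hg1, hg2, Set.union_empty]
        rw [show k - 1 + 1 = n - 1 by omega]
      · -- generic interior case
        have hi1v : (i + 1).val = i.val + 1 := by rw [hsv, if_neg h]
        have hi1ne : ¬ (i+1).val = k - 1 := by omega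
        simp only [hM', hx', if_neg h, if_neg hi1ne, hi1v]
        exact hD.adjn (i.val + 1)
  · -- disjointness
    intro i j hij hji1 hij1
    have hiv := hvlt i
    have hjv := hvlt j
    have hvne : i.val ≠ j.val := fun h => hij (ZMod.val_injective k h)
    have hji1' : j.val ≠ (if i.val = k - 1 then 0 else i.val + 1) := by
      intro h
      exact hji1 (ZMod.val_injective k (by rw [hsv i]; exact h))
    have hij1' : i.val ≠ (if j.val = k - 1 then 0 else j.val + 1) := by
      intro h
      exact hij1 (ZMod.val_injective k (by rw [hsv j]; exact h))
    show M' i ∩ M' j = ∅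
    by_cases h : i.val = k - 1
    · rw [if_pos h] at hji1'
      have hjne : ¬ j.val = k - 1 := fun hc => hvne (by omega)
      have hjne2 : j.val ≠ k - 2 := by
        rw [if_neg hjne] at hij1'
        omega
      simp only [hM', if_pos h, if_neg hjne]
      rw [Set.union_inter_distrib_right]
      rw [hD.disjn (n-1) (j.val+1) (by omega) (by omega) (by omega) (by omega)
        (by omega)]
      rw [hD.disjn 0 (j.val+1) (by omega) (by omega) (by omega) (by omega) (by omega)]
      simp
    · by_cases hj : j.val = k - 1
      · rw [if_pos hj] at hij1'
        have hine2 : i.val ≠ k - 2 := by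
          rw [if_neg h] at hji1'
          omega
        simp only [hM', if_neg h, if_pos hj]
        rw [Set.inter_union_distrib_left]
        rw [hD.disjn (i.val+1) (n-1) (by omega) (by omega) (by omega) (by omega)
          (by omega)]
        rw [hD.disjn (i.val+1) 0 (by omega) (by omega) (by omega) (by omega) (by omega)]
        simp
      · rw [if_neg h] at hji1'
        rw [if_neg hj] at hij1'
        simp only [hM', if_neg h, if_neg hj]
        exact hD.disjn (i.val+1) (j.val+1) (by omega) (by omega) (by omega) (by omega)
          (by omega)
  · -- cover
    apply Subset.antisymm (subset_univ _)
    intro z _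
    have : z ∈ ⋃ l, M l := hD.cover ▸ trivial
    obtain ⟨l, hl⟩ := Set.mem_iUnion.1 this
    have hlv : l.val < n := ZMod.val_lt l
    have hlcast : ((l.val : ℕ) : ZMod n) = l := ZMod.natCast_rightInverse l
    by_cases h0 : l.val = 0
    · refine Set.mem_iUnion.2 ⟨((k-1 : ℕ) : ZMod k), ?_⟩
      have : ((k-1 : ℕ) : ZMod k).val = k - 1 := ZMod.val_cast_of_lt (by omega)
      simp only [hM', this, if_pos rfl]
      right
      rw [← hlcast, h0] at hl
      exact hl
    · by_cases hn1 : l.val = n - 1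
      · refine Set.mem_iUnion.2 ⟨((k-1 : ℕ) : ZMod k), ?_⟩
        have : ((k-1 : ℕ) : ZMod k).val = k - 1 := ZMod.val_cast_of_lt (by omega)
        simp only [hM', this, if_pos rfl]
        left
        rw [← hlcast, hn1] at hl
        exact hl
      · refine Set.mem_iUnion.2 ⟨((l.val - 1 : ℕ) : ZMod k), ?_⟩
        have hv : ((l.val - 1 : ℕ) : ZMod k).val = l.val - 1 :=
          ZMod.val_cast_of_lt (by omega)
        have hne : ¬ ((l.val - 1 : ℕ) : ZMod k).val = k - 1 := by rw [hv]; omega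
        simp only [hM', if_neg hne, hv]
        rw [show l.val - 1 + 1 = l.val by omega, hlcast]
        exact hl
  · -- range
    apply Subset.antisymm
    · rintro z ⟨i, rfl⟩
      have hiv := hvlt i
      refine ⟨⟨_, rfl⟩, ?_⟩
      intro hmem
      rw [Set.mem_singleton_iff] at hmem
      have := hD.inj hmem
      exact absurd (zmod_cast_inj (by omega) (by omega) this) (by omega)
    · rintro z ⟨⟨l, rfl⟩, hne'⟩
      rw [Set.mem_singleton_iff] at hne'
      have hlv : l.val < n := ZMod.val_lt l
      have hlcast : ((l.val : ℕ) : ZMod n) = l := ZMod.natCast_rightInverse l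
      have hl0 : l.val ≠ 0 := by
        intro h0
        exact hne' (by rw [← hlcast, h0])
      refine ⟨((l.val - 1 : ℕ) : ZMod k), ?_⟩
      simp only [hx']
      rw [ZMod.val_cast_of_lt (by omega : l.val - 1 < k)]
      rw [show l.val - 1 + 1 = l.val by omega, hlcast]

end CyclicDecomp

end Drop
section Restrict

variable {X : Type*} [MetricSpace X] [CompactSpace X] [ConnectedSpace X]

lemma subset_cyclicFinset (hnc : ∀ p : X, ¬CutPoint p) :
    ∀ n : ℕ, ∀ {x : ZMod n → X} {M : ZMod n → Set X}, CyclicDecomp n x M →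
    ∀ A : Set X, A ⊆ Set.range x → 2 ≤ A.ncard → CyclicFinset A := by
  intro n
  induction n using Nat.strong_induction_on with
  | _ n ih =>
    intro x M hD A hsub hcard
    by_cases heq : A = Set.range x
    · exact Or.inr ⟨n, x, M, hD, heq⟩
    · have hss : A ⊂ Set.range x := ⟨hsub, fun h => heq (Subset.antisymm hsub h)⟩
      obtain ⟨p, hp, hpA⟩ := Set.exists_of_ssubset hss
      obtain ⟨κ, rfl⟩ := hp
      set x2 : ZMod n → X := fun i => x (i + κ) with hx2
      set M2 : ZMod n → Set X := fun i => M (i + κ) with hM2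
      have hD2 : CyclicDecomp n x2 M2 := hD.rotate κ
      have hr : Set.range x2 = Set.range x := CyclicDecomp.range_comp_add x κ
      have hx20 : x2 ((0:ℕ) : ZMod n) = x κ := by
        simp only [hx2, Nat.cast_zero, zero_add]
      rcases Nat.lt_or_ge n 4 with hn3 | hn4
      · -- n = 3 : A must be the pair of the two other points
        have hn : n = 3 := by have := hD.big; omega
        subst hn
        have henum : ∀ i : ZMod 3, i = ((0:ℕ) : ZMod 3) ∨ i = 1 ∨ i = 2 := by decide
        have hA12 : A ⊆ {x2 1, x2 2} := by
          intro z hz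
          have hz2 : z ∈ Set.range x2 := by rw [hr]; exact hsub hz
          obtain ⟨i, rfl⟩ := hz2
          rcases henum i with rfl | rfl | rfl
          · rw [hx20] at hz
            exact absurd hz hpA
          · exact Or.inl rfl
          · exact Or.inr rfl
        have hne12 : x2 1 ≠ x2 2 := hD2.inj.ne (by decide)
        have hAeq : A = {x2 1, x2 2} :=
          Set.eq_of_subset_of_ncard_le hA12
            (by rw [Set.ncard_pair hne12]; exact hcard) (Set.toFinite _)
        have hsp := tri_seppair hD2 1
        rw [show (1 + 1 : ZMod 3) = 2 by decide] at hsp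
        exact Or.inl ⟨x2 1, x2 2, cutPair_of_cuts hnc hne12 ⟨_, _, hsp⟩, hAeq⟩
      · -- n ≥ 4 : drop the point x κ and recurse
        obtain ⟨x3, M3, hD3, hr3⟩ := hD2.drop_one hn4
        apply ih (n-1) (by omega) hD3 A ?_ hcard
        rw [hr3, hr, hx20]
        exact fun z hz => ⟨hsub hz, fun hmem => hpA (hmem ▸ hz)⟩

end Restrict
section NoBoth

variable {X : Type*} [MetricSpace X] [CompactSpace X] [ConnectedSpace X]

lemma pair_closed (c d : X) : IsClosed ({c, d} : Set X) := (Set.toFinite _).isClosed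

lemma no_both_side (hnc : ∀ p : X, ¬CutPoint p)
    {n : ℕ} {x : ZMod n → X} {M : ZMod n → Set X} (hD : CyclicDecomp n x M)
    {c d : X} {U V : Set X} (hsep : SepPair ({c, d} : Set X) U V)
    {a b : X} (ha : a ∈ U) (hb : b ∈ V) (hbR : b ∈ Set.range x)
    {ι : ZMod n} (hcM : c ∈ M ι) (hd : d ∉ M ι)
    (h0 : x ι ∈ U) (h1 : x (ι+1) ∈ U) : False := by
  have hCcl : IsClosed ({c, d} : Set X) := pair_closed c d
  have hUo : IsOpen U := hsep.open_left hCcl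
  have hVo : IsOpen V := hsep.open_right hCcl
  have hclV : closure V ⊆ V ∪ {c, d} := hsep.closure_right hCcl
  have hcC : c ∈ ({c, d} : Set X) := Or.inl rfl
  have hdC : d ∈ ({c, d} : Set X) := Or.inr rfl
  have hcU : c ∉ U := fun h => hsep.subset_left h hcC
  have hcV : c ∉ V := fun h => hsep.subset_right h hcC
  have hdV : d ∉ V := fun h => hsep.subset_right h hdC
  have hbc : b ≠ c := fun h => (h ▸ hcV) hb
  have hbd : b ≠ d := fun h => (h ▸ hdV) hb
  have hbM : b ∉ M ι := by
    obtain ⟨β, rfl⟩ := hbR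
    intro hmem
    rcases hD.mem_piece_iff.1 hmem with rfl|rfl
    · exact Set.disjoint_left.1 hsep.2.2.1 h0 hb
    · exact Set.disjoint_left.1 hsep.2.2.1 h1 hb
  have hcio : c ∈ M ι \ {x ι, x (ι+1)} := by
    refine ⟨hcM, ?_⟩
    rintro (rfl|rfl)
    · exact hcU h0
    · exact hcU h1
  set B1 : Set X := M ι ∩ V with hB1
  by_cases hBe : B1 = ∅
  · -- V misses the piece of c entirely; then d is a cut point
    have hcclV : c ∉ closure V := by
      intro hc
      obtain ⟨z, hz1, hz2⟩ :=
        mem_closure_iff.1 hc _ (hD.io_open ι) hcio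
      exact absurd (show z ∈ B1 from ⟨hz1.1, hz2⟩) (hBe ▸ Set.notMem_empty z)
    have hdclV : d ∈ closure V := by
      by_contra hdc
      have hVcl : closure V ⊆ V := by
        intro z hz
        rcases hclV hz with h'|h'
        · exact h'
        · rcases h' with rfl|rfl
          · exact absurd hz hcclV
          · exact absurd hz hdc
      rcases isClopen_iff.1 ⟨isClosed_of_closure_subset hVcl, hVo⟩ with hE|hUn
      · obtain ⟨w, hw⟩ := hsep.2.2.2.2.2
        exact (hE ▸ hw : w ∈ (∅ : Set X))
      · exact Set.disjoint_left.1 hsep.2.2.1 ha (hUn ▸ (trivial : a ∈ univ))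
    have hclVd : closure V = V ∪ {d} := by
      apply Subset.antisymm
      · intro z hz
        rcases hclV hz with h'|h'
        · exact Or.inl h'
        · rcases h' with rfl|rfl
          · exact absurd hz hcclV
          · exact Or.inr rfl
      · rintro z (hz|rfl)
        · exact subset_closure hz
        · exact hdclV
    refine hnc d ⟨V, (closure V)ᶜ, ⟨V, hVo, ?_⟩, ⟨(closure V)ᶜ, isClosed_closure.isOpen_compl, ?_⟩, ?_, ?_, hsep.2.2.2.2.2, ⟨a, ?_⟩⟩
    · rw [Set.inter_eq_self_of_subset_left]
      intro z hz hzd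
      rw [Set.mem_singleton_iff] at hzd
      exact (hzd ▸ hdV) hz
    · rw [Set.inter_eq_self_of_subset_left]
      intro z hz hzd
      rw [Set.mem_singleton_iff] at hzd
      exact hz (hzd ▸ hdclV)
    · rw [Set.disjoint_left]
      exact fun z hz hz2 => hz2 (subset_closure hz)
    · apply Subset.antisymm
      · rintro z (hz|hz)
        · intro hzd
          rw [Set.mem_singleton_iff] at hzd
          exact (hzd ▸ hdV) hz
        · intro hzd
          rw [Set.mem_singleton_iff] at hzd
          exact hz (hzd ▸ hdclV)
      · intro z hz
        by_cases hzV : z ∈ closure V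
        · rw [hclVd] at hzV
          rcases hzV with h'|rfl
          · exact Or.inl h'
          · exact absurd rfl hz
        · exact Or.inr hzV
    · intro hac
      rw [hclVd] at hac
      rcases hac with h'|rfl
      · exact Set.disjoint_left.1 hsep.2.2.1 ha h'
      · exact hsep.subset_left ha (Or.inr rfl)
  · -- V meets the piece of c; then c is a cut point
    have hB1io : B1 = (M ι \ {x ι, x (ι+1)}) ∩ V := by
      apply Subset.antisymm
      · rintro z ⟨hz1, hz2⟩
        refine ⟨⟨hz1, ?_⟩, hz2⟩
        rintro (rfl|rfl)
        · exact Set.disjoint_left.1 hsep.2.2.1 h0 hz2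
        · exact Set.disjoint_left.1 hsep.2.2.1 h1 hz2
      · rintro z ⟨hz1, hz2⟩
        exact ⟨hz1.1, hz2⟩
    have hB1open : IsOpen B1 := by rw [hB1io]; exact (hD.io_open ι).inter hVo
    have hcB1 : c ∉ B1 := fun h => hcV h.2
    have hBcl : IsClosed (B1 ∪ {c}) := by
      apply isClosed_of_closure_subset
      rw [closure_union, closure_singleton]
      apply Set.union_subset _ subset_union_right
      intro z hz
      have hzM : z ∈ M ι := closure_mono Set.inter_subset_left hz |> fun h =>
        (hD.closed ι).closure_subset h
      have hzV : z ∈ closure V := closure_mono Set.inter_subset_right hz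
      rcases hclV hzV with h'|h'
      · exact Or.inl ⟨hzM, h'⟩
      · rcases h' with rfl|rfl
        · exact Or.inr rfl
        · exact absurd hzM hd
    refine hnc c ⟨B1, (B1 ∪ {c})ᶜ, ⟨B1, hB1open, ?_⟩,
      ⟨(B1 ∪ {c})ᶜ, hBcl.isOpen_compl, ?_⟩, ?_, ?_,
      Set.nonempty_iff_ne_empty.2 hBe, ⟨b, ?_⟩⟩
    · rw [Set.inter_eq_self_of_subset_left]
      intro z hz hzc
      rw [Set.mem_singleton_iff] at hzc
      exact (hzc ▸ hcB1) hz
    · rw [Set.inter_eq_self_of_subset_left]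
      intro z hz hzc
      rw [Set.mem_singleton_iff] at hzc
      exact hz (hzc ▸ Or.inr rfl)
    · rw [Set.disjoint_left]
      exact fun z hz hz2 => hz2 (Or.inl hz)
    · apply Subset.antisymm
      · rintro z (hz|hz)
        · intro hzc
          rw [Set.mem_singleton_iff] at hzc
          exact (hzc ▸ hcB1) hz
        · intro hzc
          rw [Set.mem_singleton_iff] at hzc
          exact hz (hzc ▸ Or.inr rfl)
      · intro z hz
        by_cases hzB : z ∈ B1 ∪ {c}
        · rcases hzB with h'|h'
          · exact Or.inl h'
          · rw [Set.mem_singleton_iff] at h'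
            exact absurd h' hz
        · exact Or.inr hzB
    · intro hmem
      rcases hmem with h'|h'
      · exact hbM h'.1
      · rw [Set.mem_singleton_iff] at h'
        exact hbc h'

end NoBoth
section Insert

variable {X : Type*} [MetricSpace X] [CompactSpace X] [ConnectedSpace X]

/-- Inserting a point `c` of a separating pair `{c,d}` (separating two points of the
decomposition) into a cyclic decomposition. -/
lemma insert_decomp (hnc : ∀ p : X, ¬CutPoint p)
    {n : ℕ} {x : ZMod n → X} {M : ZMod n → Set X} (hD : CyclicDecomp n x M)
    {c d : X} {U V : Set X} (hsep : SepPair ({c, d} : Set X) U V)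
    {a b : X} (ha : a ∈ U) (hb : b ∈ V) (haR : a ∈ Set.range x) (hbR : b ∈ Set.range x)
    (hc : c ∉ Set.range x) :
    ∃ (x' : ZMod (n+1) → X) (M' : ZMod (n+1) → Set X),
      CyclicDecomp (n+1) x' M' ∧ Set.range x' = insert c (Set.range x) := by
  haveI := hD.nz
  have hn := hD.big
  have hCcl : IsClosed ({c, d} : Set X) := pair_closed c d
  have hUo : IsOpen U := hsep.open_left hCcl
  have hVo : IsOpen V := hsep.open_right hCcl
  have hcC : c ∈ ({c, d} : Set X) := Or.inl rfl
  have hdC : d ∈ ({c, d} : Set X) := Or.inr rfl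
  have hab : a ≠ b := fun h => Set.disjoint_left.1 hsep.2.2.1 ha (h ▸ hb)
  have hac : a ≠ c := fun h => hsep.subset_left ha (h ▸ hcC)
  have had : a ≠ d := fun h => hsep.subset_left ha (h ▸ hdC)
  have hbc : b ≠ c := fun h => hsep.subset_right hb (h ▸ hcC)
  have hbd : b ≠ d := fun h => hsep.subset_right hb (h ▸ hdC)
  -- find the piece containing c
  have : c ∈ ⋃ i, M i := hD.cover ▸ trivial
  obtain ⟨ι, hcι⟩ := Set.mem_iUnion.1 this
  -- rotate so that the piece containing c is at index (n-1)
  set x2 : ZMod n → X := fun i => x (i + (ι+1)) with hx2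
  set M2 : ZMod n → Set X := fun i => M (i + (ι+1)) with hM2
  have hD2 : CyclicDecomp n x2 M2 := hD.rotate (ι+1)
  have hr2 : Set.range x2 = Set.range x := CyclicDecomp.range_comp_add x (ι+1)
  have hsucc1 : ((n-1 : ℕ) : ZMod n) + 1 = 0 := by
    rw [zmod_cast_add_one, show n-1+1 = n by omega, ZMod.natCast_self]
  have hcM2 : c ∈ M2 ((n-1 : ℕ) : ZMod n) := by
    have : ((n-1 : ℕ) : ZMod n) + (ι + 1) = ι := by
      linear_combination hsucc1
    simp only [hM2]
    rw [this]
    exact hcι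
  set ι2 : ZMod n := ((n-1 : ℕ) : ZMod n) with hι2
  have hι2v : ι2.val = n - 1 := ZMod.val_cast_of_lt (by omega)
  have hcR2 : c ∉ Set.range x2 := by rw [hr2]; exact hc
  have haR2 : a ∈ Set.range x2 := by rw [hr2]; exact haR
  have hbR2 : b ∈ Set.range x2 := by rw [hr2]; exact hbR
  -- c is in the interior of its piece
  have hcio : c ∈ M2 ι2 \ {x2 ι2, x2 (ι2+1)} := by
    refine ⟨hcM2, ?_⟩
    rintro (h|h)
    · exact hcR2 ⟨ι2, h.symm⟩
    · exact hcR2 ⟨ι2+1, h.symm⟩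
  -- only the ι2 piece contains c
  have hconly : ∀ j : ZMod n, c ∈ M2 j → j = ι2 := by
    intro j hj
    by_contra hne
    exact hcio.2 (hD2.inter_subset_endpoints hne ⟨hcM2, hj⟩)
  -- generic chain-contradiction tool
  have hchain_contra : ∀ (s : ZMod n) (m : ℕ), 1 ≤ m →
      c ∉ (⋃ l ∈ Finset.range m, M2 (s + (l : ZMod n))) →
      d ∉ (⋃ l ∈ Finset.range m, M2 (s + (l : ZMod n))) →
      a ∈ (⋃ l ∈ Finset.range m, M2 (s + (l : ZMod n))) →
      b ∈ (⋃ l ∈ Finset.range m, M2 (s + (l : ZMod n))) → False := by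
    intro s m hm hcn hdn hain hbin
    have hconn := hD2.chain_conn s m hm
    have hsub : (⋃ l ∈ Finset.range m, M2 (s + (l : ZMod n))) ⊆ U ∪ V := by
      intro w hw
      rw [hsep.2.2.2.1]
      rintro (rfl|rfl)
      · exact hcn hw
      · exact hdn hw
    rcases hconn.2.subset_or_subset hUo hVo hsep.2.2.1 hsub with h|h
    · exact Set.disjoint_left.1 hsep.2.2.1 (h hbin) hb
    · exact Set.disjoint_left.1 hsep.2.2.1 ha (h hain)
  -- membership of x2 ↑t in a chain starting at ↑s₀
  have hchain_pt : ∀ (s₀ m t : ℕ), t < m → s₀ + t < n →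
      M2 ((s₀ + t : ℕ) : ZMod n) ⊆ ⋃ l ∈ Finset.range m, M2 (((s₀:ℕ) : ZMod n) + (l : ZMod n)) := by
    intro s₀ m t ht hsn z hz
    refine Set.mem_biUnion (Finset.mem_range.2 ht) ?_
    rwa [← Nat.cast_add]
  have hchain_idx : ∀ (s₀ m : ℕ) (z : X), s₀ + m ≤ n →
      z ∈ (⋃ l ∈ Finset.range m, M2 (((s₀:ℕ) : ZMod n) + (l : ZMod n))) →
      ∃ t : ℕ, s₀ ≤ t ∧ t < s₀ + m ∧ z ∈ M2 ((t : ℕ) : ZMod n) := by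
    intro s₀ m z hsm hj
    simp only [Set.mem_iUnion, Finset.mem_range] at hj
    obtain ⟨l, hl, hmem⟩ := hj
    refine ⟨s₀ + l, by omega, by omega, ?_⟩
    rwa [Nat.cast_add]
  -- d is not in the piece of c
  have hd : d ∉ M2 ι2 := by
    intro hdM
    by_cases hdx : d ∈ ({x2 ι2, x2 (ι2+1)} : Set X)
    · rcases hdx with hdx|hdx
      · -- d = x2 ι2 : use the chain of pieces ↑0 .. ↑(n-3)
        have hkey : ∀ α : ZMod n, α ≠ ι2 →
            x2 α ∈ ⋃ l ∈ Finset.range (n-2), M2 (((0:ℕ) : ZMod n) + (l : ZMod n)) := by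
          intro α hα
          have hαv : α.val < n := ZMod.val_lt α
          have hcast : ((α.val : ℕ) : ZMod n) = α := ZMod.natCast_rightInverse α
          have hαv2 : α.val ≠ n - 1 := fun h =>
            hα (by rw [← hcast, h])
          by_cases h2 : α.val = n - 2
          · apply hchain_pt 0 (n-2) (n-3) (by omega) (by omega)
            have := hD2.mem_rightn (n-3)
            rw [show n-3+1 = n-2 by omega] at this
            rw [show (0 + (n-3)) = n-3 by omega]
            rw [← hcast, h2]
            exact this
          · apply hchain_pt 0 (n-2) α.val (by omega) (by omega)
            rw [show (0 + α.val) = α.val by omega, hcast]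
            exact hD2.mem_self α
        have hanec : a ≠ x2 ι2 := hdx ▸ had
        have hbnec : b ≠ x2 ι2 := hdx ▸ hbd
        obtain ⟨α, rfl⟩ := haR2
        obtain ⟨β, rfl⟩ := hbR2
        refine hchain_contra 0 (n-2) (by omega) ?_ ?_
          (by rw [show ((0:ZMod n)) = ((0:ℕ) : ZMod n) by push_cast; rfl]
              exact hkey α (fun h => hanec (by rw [h])))
          (by rw [show ((0:ZMod n)) = ((0:ℕ) : ZMod n) by push_cast; rfl]
              exact hkey β (fun h => hbnec (by rw [h])))
        · intro hmem
          rw [show ((0:ZMod n)) = ((0:ℕ) : ZMod n) by push_cast; rfl] at hmem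
          obtain ⟨t, ht0, htm, htmem⟩ := hchain_idx 0 (n-2) c (by omega) hmem
          have := hconly _ htmem
          rw [hι2] at this
          exact absurd (zmod_cast_inj (by omega) (by omega) this) (by omega)
        · intro hmem
          rw [show ((0:ZMod n)) = ((0:ℕ) : ZMod n) by push_cast; rfl] at hmem
          obtain ⟨t, ht0, htm, htmem⟩ := hchain_idx 0 (n-2) d (by omega) hmem
          rw [hdx] at htmem
          have : ι2.val = t ∨ ι2.val = (t+1) % n := by
            have h2 : x2 ((ι2.val : ℕ) : ZMod n) ∈ M2 ((t : ℕ) : ZMod n) := by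
              rw [ZMod.natCast_rightInverse ι2]
              exact htmem
            exact hD2.mem_piecen (by omega) (by omega) h2
          rw [hι2v] at this
          rcases this with h'|h'
          · omega
          · rw [Nat.mod_eq_of_lt (by omega)] at h'
            omega
      · -- d = x2 (ι2+1) = x2 ↑0 : use the chain of pieces ↑1 .. ↑(n-2)
        rw [Set.mem_singleton_iff] at hdx
        have hι21 : ι2 + 1 = ((0:ℕ) : ZMod n) := by
          rw [hι2, hsucc1]; push_cast; rfl
        have hkey : ∀ α : ZMod n, α ≠ ((0:ℕ) : ZMod n) →
            x2 α ∈ ⋃ l ∈ Finset.range (n-2), M2 (((1:ℕ) : ZMod n) + (l : ZMod n)) := by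
          intro α hα
          have hαv : α.val < n := ZMod.val_lt α
          have hcast : ((α.val : ℕ) : ZMod n) = α := ZMod.natCast_rightInverse α
          have hαv2 : α.val ≠ 0 := fun h => hα (by rw [← hcast, h])
          by_cases h2 : α.val = n - 1
          · apply hchain_pt 1 (n-2) (n-3) (by omega) (by omega)
            have := hD2.mem_rightn (n-2)
            rw [show n-2+1 = n-1 by omega] at this
            rw [show (1 + (n-3)) = n-2 by omega]
            rw [← hcast, h2]
            exact this
          · apply hchain_pt 1 (n-2) (α.val - 1) (by omega) (by omega)
            rw [show (1 + (α.val - 1)) = α.val by omega, hcast]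
            exact hD2.mem_self α
        have hanec : a ≠ x2 (ι2+1) := hdx ▸ had
        have hbnec : b ≠ x2 (ι2+1) := hdx ▸ hbd
        obtain ⟨α, rfl⟩ := haR2
        obtain ⟨β, rfl⟩ := hbR2
        refine hchain_contra ((1:ℕ) : ZMod n) (n-2) (by omega) ?_ ?_
          (hkey α (fun h => hanec (by rw [h, ← hι21])))
          (hkey β (fun h => hbnec (by rw [h, ← hι21])))
        · intro hmem
          obtain ⟨t, ht0, htm, htmem⟩ := hchain_idx 1 (n-2) c (by omega) hmem
          have := hconly _ htmem
          rw [hι2] at this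
          exact absurd (zmod_cast_inj (by omega) (by omega) this) (by omega)
        · intro hmem
          obtain ⟨t, ht0, htm, htmem⟩ := hchain_idx 1 (n-2) d (by omega) hmem
          rw [hdx, hι21] at htmem
          have := hD2.mem_piecen (a := t) (by omega) (by omega) htmem
          rcases this with h'|h'
          · omega
          · rw [Nat.mod_eq_of_lt (by omega)] at h'
            omega
    · -- d in the interior of the piece of c : chain of all other pieces ↑0 .. ↑(n-2)
      have hdonly : ∀ j : ZMod n, d ∈ M2 j → j = ι2 := by
        intro j hj
        by_contra hne
        exact hdx (hD2.inter_subset_endpoints hne ⟨hdM, hj⟩)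
      have hkey : ∀ α : ZMod n,
          x2 α ∈ ⋃ l ∈ Finset.range (n-1), M2 (((0:ℕ) : ZMod n) + (l : ZMod n)) := by
        intro α
        have hαv : α.val < n := ZMod.val_lt α
        have hcast : ((α.val : ℕ) : ZMod n) = α := ZMod.natCast_rightInverse α
        by_cases h2 : α.val = n - 1
        · apply hchain_pt 0 (n-1) (n-2) (by omega) (by omega)
          have := hD2.mem_rightn (n-2)
          rw [show n-2+1 = n-1 by omega] at this
          rw [show (0 + (n-2)) = n-2 by omega]
          rw [← hcast, h2]
          exact this
        · apply hchain_pt 0 (n-1) α.val (by omega) (by omega)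
          rw [show (0 + α.val) = α.val by omega, hcast]
          exact hD2.mem_self α
      obtain ⟨α, rfl⟩ := haR2
      obtain ⟨β, rfl⟩ := hbR2
      refine hchain_contra ((0:ℕ) : ZMod n) (n-1) (by omega) ?_ ?_ (hkey α) (hkey β)
      · intro hmem
        obtain ⟨t, ht0, htm, htmem⟩ := hchain_idx 0 (n-1) c (by omega) hmem
        have := hconly _ htmem
        rw [hι2] at this
        exact absurd (zmod_cast_inj (by omega) (by omega) this) (by omega)
      · intro hmem
        obtain ⟨t, ht0, htm, htmem⟩ := hchain_idx 0 (n-1) d (by omega) hmem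
        have := hdonly _ htmem
        rw [hι2] at this
        exact absurd (zmod_cast_inj (by omega) (by omega) this) (by omega)
  -- endpoints of the piece lie on opposite sides
  have hx0C : x2 ι2 ∈ U ∪ V := by
    rw [hsep.2.2.2.1]
    rintro (h|h)
    · exact hcR2 ⟨ι2, h⟩
    · exact hd (h ▸ hD2.mem_self ι2)
  have hx1C : x2 (ι2+1) ∈ U ∪ V := by
    rw [hsep.2.2.2.1]
    rintro (h|h)
    · exact hcR2 ⟨ι2+1, h⟩
    · exact hd (h ▸ hD2.mem_right ι2)
  obtain ⟨W₁, W₂, hsep2, h0, h1⟩ :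
      ∃ W₁ W₂, SepPair ({c, d} : Set X) W₁ W₂ ∧ x2 ι2 ∈ W₁ ∧ x2 (ι2+1) ∈ W₂ := by
    rcases hx0C with h0|h0 <;> rcases hx1C with h1|h1
    · exact (no_both_side hnc hD2 hsep ha hb hbR2 hcM2 hd h0 h1).elim
    · exact ⟨U, V, hsep, h0, h1⟩
    · exact ⟨V, U, hsep.symm', h0, h1⟩
    · exact (no_both_side hnc hD2 hsep.symm' hb ha haR2 hcM2 hd h0 h1).elim
  -- split the piece M2 ι2 at c
  have hW1o : IsOpen W₁ := hsep2.open_left hCcl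
  have hW2o : IsOpen W₂ := hsep2.open_right hCcl
  have hclW1 : closure W₁ ⊆ W₁ ∪ {c, d} := hsep2.closure_left hCcl
  have hclW2 : closure W₂ ⊆ W₂ ∪ {c, d} := hsep2.closure_right hCcl
  have hcW1 : c ∉ W₁ := fun h => hsep2.subset_left h hcC
  have hcW2 : c ∉ W₂ := fun h => hsep2.subset_right h hcC
  set A : Set X := (M2 ι2 ∩ W₁) ∪ {c} with hA
  set B : Set X := (M2 ι2 ∩ W₂) ∪ {c} with hB
  have hclosedAB : ∀ (W : Set X), closure W ⊆ W ∪ {c, d} →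
      IsClosed ((M2 ι2 ∩ W) ∪ {c}) := by
    intro W hclW
    apply isClosed_of_closure_subset
    rw [closure_union, closure_singleton]
    apply Set.union_subset _ subset_union_right
    intro z hz
    have hzM : z ∈ M2 ι2 :=
      (hD2.closed ι2).closure_subset (closure_mono Set.inter_subset_left hz)
    have hzW : z ∈ closure W := closure_mono Set.inter_subset_right hz
    rcases hclW hzW with h'|h'
    · exact Or.inl ⟨hzM, h'⟩
    · rcases h' with rfl|rfl
      · exact Or.inr rfl
      · exact absurd hzM hd
  have hAclosed : IsClosed A := hclosedAB W₁ hclW1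
  have hBclosed : IsClosed B := hclosedAB W₂ hclW2
  have hconnAB : ∀ (W : Set X), IsOpen W → closure W ⊆ W ∪ {c, d} → c ∉ W →
      IsConnected ((M2 ι2 ∩ W) ∪ {c}) := by
    intro W hWo hclW hcW
    have hbump : ∀ q ∈ M2 ι2 ∩ W, c ∈ closure (connectedComponentIn (M2 ι2 ∩ W) q) := by
      intro q hq
      obtain ⟨w, hw1, hw2⟩ := bump_closure (hD2.cpt ι2) (hD2.conn ι2) hWo hq.1 hq.2
        (fun hsub => hcW (hsub hcM2))
      have hwM : w ∈ M2 ι2 := (hD2.closed ι2).closure_subset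
        (closure_mono (fun z hz => (connectedComponentIn_subset _ _ hz).1) hw1)
      have hwclW : w ∈ closure W := closure_mono
        (fun z hz => (connectedComponentIn_subset _ _ hz).2) hw1
      rcases hclW hwclW with h'|h'
      · exact absurd h' hw2
      · rcases h' with rfl|rfl
        · exact hw1
        · exact absurd hwM hd
    have hU : ((M2 ι2 ∩ W) ∪ {c}) = ⋃₀ (insert {c}
        {P | ∃ q ∈ M2 ι2 ∩ W, P = connectedComponentIn (M2 ι2 ∩ W) q ∪ {c}}) := by
      apply Subset.antisymm
      · rintro z (hz|hz)
        · exact ⟨_, Set.mem_insert_of_mem _ ⟨z, hz, rfl⟩,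
            Or.inl (mem_connectedComponentIn hz)⟩
        · exact ⟨{c}, Set.mem_insert _ _, hz⟩
      · rintro z ⟨P, hP, hzP⟩
        rcases hP with rfl|⟨q, hq, rfl⟩
        · exact Or.inr hzP
        · rcases hzP with hzP|hzP
          · exact Or.inl (connectedComponentIn_subset _ _ hzP)
          · exact Or.inr hzP
    refine ⟨⟨c, Or.inr rfl⟩, ?_⟩
    rw [hU]
    apply isPreconnected_sUnion c
    · rintro P (rfl|⟨q, hq, rfl⟩)
      · rfl
      · exact Or.inr rfl
    · rintro P (rfl|⟨q, hq, rfl⟩)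
      · exact isPreconnected_singleton
      · refine isPreconnected_connectedComponentIn.subset_closure subset_union_left ?_
        apply Set.union_subset subset_closure
        intro z hz
        rw [Set.mem_singleton_iff] at hz
        exact hz ▸ hbump q hq
  have hAconn : IsConnected A := hconnAB W₁ hW1o hclW1 hcW1
  have hBconn : IsConnected B := hconnAB W₂ hW2o hclW2 hcW2
  have hAsub : A ⊆ M2 ι2 := by
    rintro z (hz|hz)
    · exact hz.1
    · rw [Set.mem_singleton_iff] at hz
      exact hz ▸ hcM2
  have hBsub : B ⊆ M2 ι2 := by
    rintro z (hz|hz)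
    · exact hz.1
    · rw [Set.mem_singleton_iff] at hz
      exact hz ▸ hcM2
  have hx1A : x2 (ι2+1) ∉ A := by
    rintro (hz|hz)
    · exact Set.disjoint_left.1 hsep2.2.2.1 hz.2 h1
    · rw [Set.mem_singleton_iff] at hz
      exact hcR2 ⟨ι2+1, hz⟩
  have hx0B : x2 ι2 ∉ B := by
    rintro (hz|hz)
    · exact Set.disjoint_left.1 hsep2.2.2.1 h0 hz.2
    · rw [Set.mem_singleton_iff] at hz
      exact hcR2 ⟨ι2, hz⟩
  have hx0A : x2 ι2 ∈ A := Or.inl ⟨hD2.mem_self ι2, h0⟩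
  have hx1B : x2 (ι2+1) ∈ B := Or.inl ⟨hD2.mem_right ι2, h1⟩
  have hABc : A ∩ B = {c} := by
    apply Subset.antisymm
    · rintro z ⟨hzA|hzA, hzB|hzB⟩
      · exact (Set.disjoint_left.1 hsep2.2.2.1 hzA.2 hzB.2).elim
      · exact hzB
      · exact hzA
      · exact hzA
    · rintro z hz
      rw [Set.mem_singleton_iff] at hz
      subst hz
      exact ⟨Or.inr rfl, Or.inr rfl⟩
  have hAuB : A ∪ B = M2 ι2 := by
    apply Subset.antisymm (Set.union_subset hAsub hBsub)
    intro z hz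
    by_cases hzc : z = c
    · exact Or.inl (Or.inr hzc)
    · have hzd : z ≠ d := fun h => hd (h ▸ hz)
      have hz2 : z ∈ W₁ ∪ W₂ := by
        rw [hsep2.2.2.2.1]
        rintro (h|h)
        · exact hzc h
        · exact hzd h
      rcases hz2 with h|h
      · exact Or.inl (Or.inl ⟨hz, h⟩)
      · exact Or.inr (Or.inl ⟨hz, h⟩)
  have hAprev : M2 (ι2 - 1) ∩ A = {x2 ι2} := by
    apply Subset.antisymm
    · rintro z ⟨hz1, hz2⟩
      have hzM : z ∈ M2 ι2 := hAsub hz2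
      have hmm : z ∈ M2 (ι2-1) ∩ M2 ((ι2-1)+1) := ⟨hz1, by rwa [sub_add_cancel]⟩
      rw [hD2.adj (ι2-1)] at hmm
      rwa [sub_add_cancel] at hmm
    · rintro z hz
      rw [Set.mem_singleton_iff] at hz
      subst hz
      exact ⟨hD2.mem_prev ι2, hx0A⟩
  have hBnext : B ∩ M2 (ι2 + 1) = {x2 (ι2+1)} := by
    apply Subset.antisymm
    · rintro z ⟨hz1, hz2⟩
      have hzM : z ∈ M2 ι2 := hBsub hz1
      have hmm : z ∈ M2 ι2 ∩ M2 (ι2+1) := ⟨hzM, hz2⟩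
      rwa [hD2.adj ι2] at hmm
    · rintro z hz
      rw [Set.mem_singleton_iff] at hz
      subst hz
      exact ⟨hx1B, hD2.mem_self _⟩
  have hAMj : ∀ j : ZMod n, j ≠ ι2 → j ≠ ι2 - 1 → A ∩ M2 j = ∅ := by
    intro j hj1 hj2
    apply Set.eq_empty_iff_forall_notMem.2
    rintro z ⟨hzA, hzj⟩
    have hzM : z ∈ M2 ι2 := hAsub hzA
    rcases hD2.inter_subset_endpoints hj1 ⟨hzM, hzj⟩ with h'|h'
    · subst h'
      rcases hD2.mem_piece_iff.1 hzj with h''|h''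
      · exact hj1 h''.symm
      · exact hj2 (by rw [h'']; ring)
    · exact hx1A (h' ▸ hzA)
  have hBMj : ∀ j : ZMod n, j ≠ ι2 → j ≠ ι2 + 1 → B ∩ M2 j = ∅ := by
    intro j hj1 hj2
    apply Set.eq_empty_iff_forall_notMem.2
    rintro z ⟨hzB, hzj⟩
    have hzM : z ∈ M2 ι2 := hBsub hzB
    rcases hD2.inter_subset_endpoints hj1 ⟨hzM, hzj⟩ with h'|h'
    · exact hx0B (h' ▸ hzB)
    · subst h'
      rcases hD2.mem_piece_iff.1 hzj with h''|h''
      · exact hj2 h''.symm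
      · exact hj1 (by
          have := h''
          have h3 : ι2 = j := by
            have h4 := congrArg (fun w => w - 1) this
            simpa [add_sub_cancel_right] using h4
          exact h3.symm)
  -- cast-form versions
  have hι2m1 : ι2 - 1 = ((n-2 : ℕ) : ZMod n) := by
    rw [sub_eq_iff_eq_add, hι2, zmod_cast_add_one]
    congr 1
    omega
  have hι2p1 : ι2 + 1 = ((0:ℕ) : ZMod n) := by rw [hsucc1, Nat.cast_zero]
  have hAprevC : M2 ((n-2 : ℕ) : ZMod n) ∩ A = {x2 ((n-1 : ℕ) : ZMod n)} := by
    rw [← hι2m1, ← hι2]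
    exact hAprev
  have hBnextC : B ∩ M2 ((0 : ℕ) : ZMod n) = {x2 ((0 : ℕ) : ZMod n)} := by
    rw [← hι2p1]
    exact hBnext
  have hAMjC : ∀ t : ℕ, t < n → t ≠ n-1 → t ≠ n-2 → A ∩ M2 ((t : ℕ) : ZMod n) = ∅ := by
    intro t ht h1' h2'
    apply hAMj
    · rw [hι2]
      exact zmod_cast_ne ht (by omega) h1'
    · rw [hι2m1]
      exact zmod_cast_ne ht (by omega) h2'
  have hBMjC : ∀ t : ℕ, t < n → t ≠ n-1 → t ≠ 0 → B ∩ M2 ((t : ℕ) : ZMod n) = ∅ := by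
    intro t ht h1' h2'
    apply hBMj
    · rw [hι2]
      exact zmod_cast_ne ht (by omega) h1'
    · rw [hι2p1]
      exact zmod_cast_ne ht (by omega) h2'
  -- the new decomposition
  haveI : NeZero (n+1) := ⟨by omega⟩
  haveI : Fact (1 < n+1) := ⟨by omega⟩
  set x' : ZMod (n+1) → X := fun i =>
    if i.val < n then x2 ((i.val : ℕ) : ZMod n) else c with hx'
  set M' : ZMod (n+1) → Set X := fun i =>
    if i.val < n - 1 then M2 ((i.val : ℕ) : ZMod n)
    else if i.val = n - 1 then A else B with hM'
  have hv1 : ∀ i : ZMod (n+1), i.val < n + 1 := fun i => ZMod.val_lt i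
  have hsv : ∀ i : ZMod (n+1), (i+1).val = if i.val = n then 0 else i.val + 1 := by
    intro i
    rw [ZMod.val_add, ZMod.val_one (n+1)]
    by_cases h : i.val = n
    · simp [h]
    · have := hv1 i
      rw [if_neg h, Nat.mod_eq_of_lt (by omega)]
  refine ⟨x', M', ⟨by omega, ?_, ?_, ?_, ?_, ?_⟩, ?_⟩
  · -- injectivity
    intro i j h
    have hiv := hv1 i
    have hjv := hv1 j
    simp only [hx'] at h
    by_cases hi : i.val < n <;> by_cases hj : j.val < n
    · rw [if_pos hi, if_pos hj] at h
      have h2 := zmod_cast_inj hi hj (hD2.inj h)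
      exact ZMod.val_injective _ h2
    · rw [if_pos hi, if_neg hj] at h
      exact absurd ⟨_, h⟩ hcR2
    · rw [if_neg hi, if_pos hj] at h
      exact absurd ⟨_, h.symm⟩ hcR2
    · exact ZMod.val_injective _ (by omega)
  · -- subcontinua
    intro i
    simp only [hM']
    by_cases h1 : i.val < n - 1
    · rw [if_pos h1]
      exact ⟨hD2.cpt _, hD2.conn _⟩
    · rw [if_neg h1]
      by_cases h2 : i.val = n - 1
      · rw [if_pos h2]
        exact ⟨hAclosed.isCompact, hAconn⟩
      · rw [if_neg h2]
        exact ⟨hBclosed.isCompact, hBconn⟩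
  · -- adjacency
    intro i
    have hiv := hv1 i
    have hsvi := hsv i
    show M' i ∩ M' (i+1) = {x' (i+1)}
    by_cases hlt : i.val < n - 2
    · have h2 : (i+1).val = i.val + 1 := by rw [hsvi, if_neg (by omega)]
      simp only [hM', hx', h2]
      rw [if_pos (by omega : i.val < n - 1), if_pos (by omega : i.val + 1 < n - 1),
        if_pos (by omega : i.val + 1 < n)]
      exact hD2.adjn i.val
    · by_cases he : i.val = n - 2
      · have h2 : (i+1).val = n - 1 := by rw [hsvi, if_neg (by omega)]; omega
        simp only [hM', hx', h2, he]
        rw [if_pos (by omega : n - 2 < n - 1), if_neg (by omega : ¬ n - 1 < n - 1),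
          if_pos (by omega : n - 1 < n)]
        exact hAprevC
      · by_cases hl : i.val = n - 1
        · have h2 : (i+1).val = n := by rw [hsvi, if_neg (by omega)]; omega
          simp only [hM', hx', h2, hl]
          rw [if_neg (by omega : ¬ n - 1 < n - 1), if_neg (by omega : ¬ n < n - 1),
            if_neg (by omega : ¬ n = n - 1), if_neg (by omega : ¬ n < n)]
          exact hABc
        · have hl2 : i.val = n := by omega
          have h2 : (i+1).val = 0 := by rw [hsvi, if_pos hl2]
          simp only [hM', hx', h2, hl2]
          rw [if_neg (by omega : ¬ n < n - 1), if_neg (by omega : ¬ n = n - 1),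
            if_pos (by omega : 0 < n - 1), if_pos (by omega : 0 < n)]
          exact hBnextC
  · -- disjointness
    intro i j hij hji hij2
    have hiv := hv1 i
    have hjv := hv1 j
    have hvne : i.val ≠ j.val := fun h => hij (ZMod.val_injective _ h)
    have hji' : j.val ≠ (if i.val = n then 0 else i.val + 1) := by
      intro h
      exact hji (ZMod.val_injective _ (by rw [hsv i]; exact h))
    have hij' : i.val ≠ (if j.val = n then 0 else j.val + 1) := by
      intro h
      exact hij2 (ZMod.val_injective _ (by rw [hsv j]; exact h))
    show M' i ∩ M' j = ∅
    by_cases hi1 : i.val < n - 1 <;> by_cases hj1 : j.val < n - 1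
    · -- both old
      rw [if_neg (by omega : ¬ i.val = n)] at hji'
      rw [if_neg (by omega : ¬ j.val = n)] at hij'
      simp only [hM']
      rw [if_pos hi1, if_pos hj1]
      exact hD2.disjn i.val j.val (by omega) (by omega) hvne (by omega) (by omega)
    · -- i old, j ∈ {A, B}
      by_cases hj2 : j.val = n - 1
      · rw [if_neg (by omega : ¬ j.val = n)] at hij'
        rw [if_neg (by omega : ¬ i.val = n)] at hji'
        simp only [hM']
        rw [if_pos hi1, if_neg hj1, if_pos hj2, Set.inter_comm]
        exact hAMjC i.val (by omega) (by omega) (by omega)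
      · have hj3 : j.val = n := by omega
        rw [if_pos hj3] at hij'
        simp only [hM']
        rw [if_pos hi1, if_neg hj1, if_neg hj2, Set.inter_comm]
        exact hBMjC i.val (by omega) (by omega) (by omega)
    · -- i ∈ {A,B}, j old
      by_cases hi2 : i.val = n - 1
      · rw [if_neg (by omega : ¬ i.val = n)] at hji'
        rw [if_neg (by omega : ¬ j.val = n)] at hij'
        simp only [hM']
        rw [if_neg hi1, if_pos hi2, if_pos hj1]
        exact hAMjC j.val (by omega) (by omega) (by omega)
      · have hi3 : i.val = n := by omega
        rw [if_pos hi3] at hji'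
        simp only [hM']
        rw [if_neg hi1, if_neg hi2, if_pos hj1]
        exact hBMjC j.val (by omega) (by omega) (by omega)
    · -- both A/B : impossible or excluded
      by_cases hi2 : i.val = n - 1
      · have hj3 : j.val = n := by omega
        rw [if_neg (by omega : ¬ i.val = n)] at hji'
        exact (hji' (by omega)).elim
      · have hi3 : i.val = n := by omega
        have hj3 : j.val = n - 1 := by omega
        rw [if_neg (by omega : ¬ j.val = n)] at hij'
        exact (hij' (by omega)).elim
  · -- cover
    apply Subset.antisymm (subset_univ _)
    intro z _
    have hzin : z ∈ ⋃ l, M2 l := hD2.cover ▸ trivial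
    obtain ⟨l, hl⟩ := Set.mem_iUnion.1 hzin
    have hlv : l.val < n := ZMod.val_lt l
    have hlc : ((l.val : ℕ) : ZMod n) = l := ZMod.natCast_rightInverse l
    by_cases hln : l.val = n - 1
    · -- z ∈ M2 ι2 = A ∪ B
      have hzM : z ∈ A ∪ B := by
        rw [hAuB, hι2]
        rw [← hlc, hln] at hl
        exact hl
      rcases hzM with hz|hz
      · refine Set.mem_iUnion.2 ⟨((n-1 : ℕ) : ZMod (n+1)), ?_⟩
        have hv : ((n-1 : ℕ) : ZMod (n+1)).val = n - 1 := ZMod.val_cast_of_lt (by omega)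
        simp only [hM', hv]
        rw [if_neg (by omega : ¬ n - 1 < n - 1)]
        exact hz
      · refine Set.mem_iUnion.2 ⟨((n : ℕ) : ZMod (n+1)), ?_⟩
        have hv : ((n : ℕ) : ZMod (n+1)).val = n := ZMod.val_cast_of_lt (by omega)
        simp only [hM', hv]
        rw [if_neg (by omega), if_neg (by omega)]
        exact hz
    · refine Set.mem_iUnion.2 ⟨((l.val : ℕ) : ZMod (n+1)), ?_⟩
      have hv : ((l.val : ℕ) : ZMod (n+1)).val = l.val := ZMod.val_cast_of_lt (by omega)
      simp only [hM', hv]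
      rw [if_pos (by omega)]
      rw [hlc]
      exact hl
  · -- range
    apply Subset.antisymm
    · rintro z ⟨i, rfl⟩
      simp only [hx']
      by_cases hi : i.val < n
      · rw [if_pos hi]
        refine Set.mem_insert_of_mem _ ?_
        rw [← hr2]
        exact ⟨_, rfl⟩
      · rw [if_neg hi]
        exact Set.mem_insert _ _
    · rintro z hz
      rcases hz with rfl|hz
      · refine ⟨((n : ℕ) : ZMod (n+1)), ?_⟩
        simp only [hx']
        rw [if_neg (by rw [ZMod.val_cast_of_lt (by omega : n < n+1)]; omega)]
      · rw [← hr2] at hz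
        obtain ⟨α, rfl⟩ := hz
        have hαv : α.val < n := ZMod.val_lt α
        refine ⟨((α.val : ℕ) : ZMod (n+1)), ?_⟩
        simp only [hx']
        rw [ZMod.val_cast_of_lt (by omega : α.val < n+1), if_pos hαv,
          ZMod.natCast_rightInverse α]

end Insert
section Glue

variable {X : Type*} [MetricSpace X] [CompactSpace X] [ConnectedSpace X]

lemma three_not_in_pair {α : Type*} {a b c p q : α} (hab : a ≠ b) (hac : a ≠ c)
    (hbc : b ≠ c) : a ∈ ({p, q} : Set α) → b ∈ ({p, q} : Set α) →
    c ∈ ({p, q} : Set α) → False := by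
  rintro (rfl|rfl) (rfl|rfl) (rfl|rfl) <;> simp_all

lemma pick_avoid {α : Type*} {a b c p q : α} (hab : a ≠ b) (hac : a ≠ c) (hbc : b ≠ c) :
    ∃ w, w ∈ ({a, b, c} : Set α) ∧ w ∉ ({p, q} : Set α) := by
  by_cases ha : a ∈ ({p, q} : Set α)
  · by_cases hb : b ∈ ({p, q} : Set α)
    · exact ⟨c, Or.inr (Or.inr rfl), fun hc => three_not_in_pair hab hac hbc ha hb hc⟩
    · exact ⟨b, Or.inr (Or.inl rfl), hb⟩
  · exact ⟨a, Or.inl rfl, ha⟩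

lemma decomp_card {n : ℕ} {x : ZMod n → X} {M : ZMod n → Set X}
    (hD : CyclicDecomp n x M) : (Set.range x).ncard = n := by
  haveI := hD.nz
  rw [← Nat.card_coe_set_eq, Nat.card_range_of_injective hD.inj,
    Nat.card_eq_fintype_card, ZMod.card]

lemma cyclicSet_pair (hnc : ∀ p : X, ¬CutPoint p) {S : Set X} (hS : CyclicSet S)
    {a b : X} (ha : a ∈ S) (hb : b ∈ S) (hab : a ≠ b) : CutPair a b := by
  classical
  have hA : (↑({a, b} : Finset X) : Set X) = ({a, b} : Set X) := by simp
  have hcard : 1 < ({a, b} : Finset X).card := by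
    rw [Finset.card_insert_of_notMem (by simpa using hab), Finset.card_singleton]
    omega
  have hsub : (↑({a, b} : Finset X) : Set X) ⊆ S := by
    rw [hA]; rintro z (rfl|rfl) <;> assumption
  rcases hS {a, b} hsub hcard with ⟨a', b', hcp, heq⟩ | ⟨n, x, M, hD, heq⟩
  · rw [hA] at heq
    have haab : a ∈ ({a', b'} : Set X) := heq ▸ (Or.inl rfl : a ∈ ({a,b} : Set X))
    have hbab : b ∈ ({a', b'} : Set X) := heq ▸ (Or.inr rfl : b ∈ ({a,b} : Set X))
    rcases haab with rfl|rfl <;> rcases hbab with rfl|rfl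
    · exact absurd rfl hab
    · exact hcp
    · exact hcp.symm'
    · exact absurd rfl hab
  · exfalso
    rw [hA] at heq
    have h1 : (Set.range x).ncard = n := decomp_card hD
    rw [← heq, Set.ncard_pair hab] at h1
    have := hD.big
    omega

lemma cyclicSet_decomp {S : Set X} (hS : CyclicSet S) (A : Finset X)
    (hA : ↑A ⊆ S) {k : ℕ} (hk : A.card = k) (h3 : 3 ≤ k) :
    ∃ (x : ZMod k → X) (M : ZMod k → Set X),
      CyclicDecomp k x M ∧ Set.range x = ↑A := by
  rcases hS A hA (by omega) with ⟨a', b', hcp, heq⟩ | ⟨n, x, M, hD, heq⟩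
  · exfalso
    have h2 : (↑A : Set X).ncard ≤ 2 := by
      rw [heq]
      exact (Set.ncard_insert_le _ _).trans (by simp)
    rw [Set.ncard_coe_finset] at h2
    omega
  · have h1 : n = k := by
      have h2 := decomp_card hD
      rw [← heq, Set.ncard_coe_finset, hk] at h2
      omega
    subst h1
    exact ⟨x, M, hD, heq.symm⟩

/-- A necklace absorbs any cut pair separating two of its points. -/
lemma necklace_extend (hnc : ∀ p : X, ¬CutPoint p) {S : Set X} (hS : Necklace S)
    {c d : X} {U V : Set X} (hsep : SepPair ({c, d} : Set X) U V)
    {a b : X} (haS : a ∈ S) (hbS : b ∈ S) (ha : a ∈ U) (hb : b ∈ V) :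
    c ∈ S ∧ d ∈ S := by
  classical
  have hab : a ≠ b := fun h => Set.disjoint_left.1 hsep.2.2.1 ha (h ▸ hb)
  have hcd : c ≠ d := by
    intro h
    apply hnc c
    refine ⟨U, V, ?_⟩
    have hpair : ({c, d} : Set X) = {c} := by rw [← h]; exact Set.pair_eq_singleton c
    rwa [hpair] at hsep
  obtain ⟨p, hp, q, hq, r, hr, hpq, hpr, hqr⟩ := hS.2.1
  have hthird : ∃ e ∈ S, e ≠ a ∧ e ≠ b := by
    by_contra hno
    push_neg at hno
    have hmem : ∀ e ∈ S, e ∈ ({a, b} : Set X) := by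
      intro e he
      by_cases h : e = a
      · exact Or.inl h
      · exact Or.inr (hno e he h)
    exact three_not_in_pair hpq hpr hqr (hmem p hp) (hmem q hq) (hmem r hr)
  obtain ⟨e, heS, hea, heb⟩ := hthird
  have hclaim : CyclicSet (S ∪ {c, d}) := by
    intro F hF hFcard
    set G : Finset X := insert a (insert b (insert e (F.filter (fun z => z ∈ S))))
      with hG
    have hGsub : ↑G ⊆ S := by
      intro z hz
      simp only [hG, Finset.coe_insert, Set.mem_insert_iff, Finset.coe_filter,
        Set.mem_setOf_eq] at hz
      rcases hz with rfl|rfl|rfl|hz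
      · exact haS
      · exact hbS
      · exact heS
      · exact hz.2
    have hGcard : G.card = G.card := rfl
    have hG3 : 3 ≤ G.card := by
      have hsub3 : ({a, b, e} : Finset X) ⊆ G := by
        intro z hz
        simp only [Finset.mem_insert, Finset.mem_singleton] at hz
        simp only [hG, Finset.mem_insert]
        rcases hz with rfl|rfl|rfl
        · exact Or.inl rfl
        · exact Or.inr (Or.inl rfl)
        · exact Or.inr (Or.inr (Or.inl rfl))
      have hc3 : ({a, b, e} : Finset X).card = 3 := by
        rw [Finset.card_insert_of_notMem, Finset.card_insert_of_notMem,
          Finset.card_singleton]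
        · simpa using heb.symm
        · simp only [Finset.mem_insert, Finset.mem_singleton]
          push_neg
          exact ⟨hab, hea.symm⟩
      calc (3:ℕ) = ({a, b, e} : Finset X).card := hc3.symm
        _ ≤ G.card := Finset.card_le_card hsub3
    obtain ⟨x, M, hD, hrange⟩ := cyclicSet_decomp hS.1 G hGsub rfl hG3
    have haG : a ∈ Set.range x := by
      rw [hrange]; simp [hG]
    have hbG : b ∈ Set.range x := by
      rw [hrange]; simp [hG]
    have hmemG : ∀ z, z ∈ F → z ∈ S → z ∈ Set.range x := by
      intro z hzF hzS
      rw [hrange]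
      simp only [hG, Finset.coe_insert, Set.mem_insert_iff, Finset.coe_filter,
        Set.mem_setOf_eq]
      exact Or.inr (Or.inr (Or.inr ⟨hzF, hzS⟩))
    by_cases hcS : c ∈ S
    · by_cases hdS : d ∈ S
      · -- F ⊆ S
        apply hS.1 F ?_ hFcard
        intro z hz
        rcases hF hz with h|h
        · exact h
        · rcases h with rfl|rfl
          · exact hcS
          · exact hdS
      · -- insert only d
        have hdR : d ∉ Set.range x := by
          rw [hrange]
          intro h
          exact hdS (hGsub h)
        have hsep' : SepPair ({d, c} : Set X) U V := by rwa [Set.pair_comm]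
        obtain ⟨x', M', hD', hr'⟩ := insert_decomp hnc hD hsep' ha hb haG hbG hdR
        apply subset_cyclicFinset hnc _ hD' ↑F ?_
          (by rw [Set.ncard_coe_finset]; omega)
        intro z hz
        rw [hr']
        rcases hF hz with h|h
        · exact Set.mem_insert_iff.2 (Or.inr (hmemG z hz h))
        · rcases h with rfl|rfl
          · exact Set.mem_insert_iff.2 (Or.inr (hmemG z hz hcS))
          · exact Set.mem_insert _ _
    · have hcR : c ∉ Set.range x := by
        rw [hrange]
        intro h
        exact hcS (hGsub h)
      obtain ⟨x1, M1, hD1, hr1⟩ := insert_decomp hnc hD hsep ha hb haG hbG hcR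
      have haG1 : a ∈ Set.range x1 := by
        rw [hr1]; exact Set.mem_insert_iff.2 (Or.inr haG)
      have hbG1 : b ∈ Set.range x1 := by
        rw [hr1]; exact Set.mem_insert_iff.2 (Or.inr hbG)
      by_cases hdS : d ∈ S
      · apply subset_cyclicFinset hnc _ hD1 ↑F ?_
          (by rw [Set.ncard_coe_finset]; omega)
        intro z hz
        rw [hr1]
        rcases hF hz with h|h
        · exact Set.mem_insert_iff.2 (Or.inr (hmemG z hz h))
        · rcases h with rfl|rfl
          · exact Set.mem_insert _ _
          · exact Set.mem_insert_iff.2 (Or.inr (hmemG z hz hdS))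
      · have hdR1 : d ∉ Set.range x1 := by
          rw [hr1]
          rintro (h|h)
          · exact hcd h.symm
          · exact hdS (hGsub (hrange ▸ h))
        have hsep' : SepPair ({d, c} : Set X) U V := by rwa [Set.pair_comm]
        obtain ⟨x2, M2, hD2, hr2⟩ := insert_decomp hnc hD1 hsep' ha hb haG1 hbG1 hdR1
        apply subset_cyclicFinset hnc _ hD2 ↑F ?_
          (by rw [Set.ncard_coe_finset]; omega)
        intro z hz
        rw [hr2, hr1]
        rcases hF hz with h|h
        · exact Set.mem_insert_iff.2 (Or.inr (Set.mem_insert_iff.2 (Or.inr (hmemG z hz h))))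
        · rcases h with rfl|rfl
          · exact Set.mem_insert_iff.2 (Or.inr (Set.mem_insert _ _))
          · exact Set.mem_insert _ _
  have hSeq := hS.2.2 (S ∪ {c, d}) hclaim subset_union_left
  exact ⟨hSeq ▸ Or.inr (Or.inl rfl), hSeq ▸ Or.inr (Or.inr rfl)⟩

end Glue
section Final

variable {X : Type*} [MetricSpace X] [CompactSpace X] [ConnectedSpace X]

/-- Two distinct necklaces cannot share three points. -/
lemma NN_triple (hnc : ∀ p : X, ¬CutPoint p) {S T : Set X}
    (hS : Necklace S) (hT : Necklace T) (hne : S ≠ T) {a b c : X}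
    (haS : a ∈ S) (haT : a ∈ T) (hbS : b ∈ S) (hbT : b ∈ T)
    (hcS : c ∈ S) (hcT : c ∈ T) (hab : a ≠ b) (hac : a ≠ c) (hbc : b ≠ c) : False := by
  classical
  obtain ⟨f1, f2, f3, f4, f5, f6, f7, f8, f9, f10, f11, f12⟩ := zmod4_facts
  have hTS : ¬ T ⊆ S := fun h => hne (hT.2.2 S hS.1 h)
  obtain ⟨t, htT, htS⟩ := Set.not_subset.1 hTS
  have hta : t ≠ a := fun h => htS (h ▸ haS)
  have htb : t ≠ b := fun h => htS (h ▸ hbS)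
  have htc : t ≠ c := fun h => htS (h ▸ hcS)
  set F4 : Finset X := insert t (insert a (insert b ({c} : Finset X))) with hF4
  have hF4c : (↑F4 : Set X) = {t, a, b, c} := by simp [hF4]
  have hF4sub : ↑F4 ⊆ T := by
    rw [hF4c]
    rintro z (rfl|rfl|rfl|rfl) <;> assumption
  have hF4card : F4.card = 4 := by
    rw [hF4]
    rw [Finset.card_insert_of_notMem (by simp [hta, htb, htc]),
      Finset.card_insert_of_notMem (by simp [hab, hac]),
      Finset.card_insert_of_notMem (by simp [hbc]), Finset.card_singleton]
  obtain ⟨y, N, hDT, hrT⟩ := cyclicSet_decomp hT.1 F4 hF4sub hF4card (by omega)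
  have htR : t ∈ Set.range y := by rw [hrT, hF4c]; exact Or.inl rfl
  obtain ⟨τ, hτ⟩ := htR
  have hothers : ∀ k : ZMod 4, k ≠ τ → y k ∈ ({a, b, c} : Set X) := by
    intro k hk
    have hmem : y k ∈ (↑F4 : Set X) := by rw [← hrT]; exact ⟨k, rfl⟩
    rw [hF4c] at hmem
    rcases hmem with h|h
    · exact absurd (hDT.inj (h.trans hτ.symm)) hk
    · exact h
  obtain ⟨hQ, hm1, hm3⟩ := quad_seppair hDT τ
  rw [hτ] at hQ hm1 hm3
  have habcS : ∀ z, z ∈ ({a, b, c} : Set X) → z ∈ S := by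
    rintro z (rfl|rfl|rfl) <;> assumption
  have hclaim : CyclicSet (S ∪ {t}) := by
    intro F hF hFcard
    by_cases htF : t ∈ F
    · set G : Finset X := insert (y (τ+1)) (insert (y (τ+2)) (insert (y (τ+3))
        (F.filter (fun z => z ∈ S)))) with hG
      have hGsub : ↑G ⊆ S := by
        intro z hz
        simp only [hG, Finset.coe_insert, Set.mem_insert_iff, Finset.coe_filter,
          Set.mem_setOf_eq] at hz
        rcases hz with rfl|rfl|rfl|hz
        · exact habcS _ (hothers (τ+1) (f4 τ))
        · exact habcS _ (hothers (τ+2) (Ne.symm (f1 τ)))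
        · exact habcS _ (hothers (τ+3) (f6 τ))
        · exact hz.2
      have hG3 : 3 ≤ G.card := by
        have hsub3 : ({y (τ+1), y (τ+2), y (τ+3)} : Finset X) ⊆ G := by
          intro z hz
          simp only [Finset.mem_insert, Finset.mem_singleton] at hz
          simp only [hG, Finset.mem_insert]
          rcases hz with rfl|rfl|rfl
          · exact Or.inl rfl
          · exact Or.inr (Or.inl rfl)
          · exact Or.inr (Or.inr (Or.inl rfl))
        have hc3 : ({y (τ+1), y (τ+2), y (τ+3)} : Finset X).card = 3 := by
          rw [Finset.card_insert_of_notMem, Finset.card_insert_of_notMem,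
            Finset.card_singleton]
          · simp only [Finset.mem_singleton]
            exact hDT.inj.ne (Ne.symm (f7 τ))
          · simp only [Finset.mem_insert, Finset.mem_singleton]
            push_neg
            exact ⟨hDT.inj.ne (f5 τ), hDT.inj.ne (f9 τ)⟩
        calc (3:ℕ) = _ := hc3.symm
          _ ≤ G.card := Finset.card_le_card hsub3
      obtain ⟨x, M, hD, hrange⟩ := cyclicSet_decomp hS.1 G hGsub rfl hG3
      have hu : y (τ+1) ∈ Set.range x := by rw [hrange]; simp [hG]
      have hv : y (τ+3) ∈ Set.range x := by rw [hrange]; simp [hG]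
      have htR2 : t ∉ Set.range x := by
        rw [hrange]
        intro h
        exact htS (hGsub h)
      obtain ⟨x', M', hD', hr'⟩ := insert_decomp hnc hD hQ hm1 hm3 hu hv htR2
      apply subset_cyclicFinset hnc _ hD' ↑F ?_
        (by rw [Set.ncard_coe_finset]; omega)
      intro z hz
      rw [hr']
      rcases hF hz with h|h
      · refine Set.mem_insert_iff.2 (Or.inr ?_)
        rw [hrange]
        simp only [hG, Finset.coe_insert, Set.mem_insert_iff, Finset.coe_filter,
          Set.mem_setOf_eq]
        exact Or.inr (Or.inr (Or.inr ⟨hz, h⟩))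
      · rw [Set.mem_singleton_iff] at h
        exact h ▸ Set.mem_insert _ _
    · apply hS.1 F ?_ hFcard
      intro z hz
      rcases hF hz with h|h
      · exact h
      · rw [Set.mem_singleton_iff] at h
        exact absurd (h ▸ hz) htF
  have hSeq := hS.2.2 (S ∪ {t}) hclaim subset_union_left
  exact htS (hSeq ▸ Or.inr rfl)

/-- The pair lemma for two necklaces. -/
lemma NN_pair (hnc : ∀ p : X, ¬CutPoint p) {S T : Set X}
    (hS : Necklace S) (hT : Necklace T) {a b : X} (hab : a ≠ b)
    (haS : a ∈ S) (haT : a ∈ T) (hbS : b ∈ S) (hbT : b ∈ T)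
    (hint : S ∩ T = {a, b}) : InsepCutPair a b := by
  refine ⟨cyclicSet_pair hnc hS.1 haS hbS hab, insep_pair_of hab ?_⟩
  rintro c d hcd ⟨U, V, hsp, hU, hV⟩
  have hUa : a ∈ U := hU rfl
  have hVb : b ∈ V := hV rfl
  have h1 := necklace_extend hnc hS hsp haS hbS hUa hVb
  have h2 := necklace_extend hnc hT hsp haT hbT hUa hVb
  have hcST : c ∈ S ∩ T := ⟨h1.1, h2.1⟩
  rw [hint] at hcST
  rcases hcST with rfl|rfl
  · exact hsp.subset_left hUa (Or.inl rfl)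
  · exact hsp.subset_right hVb (Or.inl rfl)

/-- A necklace and an inseparable set cannot share three points. -/
lemma NI_triple (hnc : ∀ p : X, ¬CutPoint p) {S I : Set X}
    (hS : Necklace S) (hI : InsepSet I) (hne : S ≠ I) {a b c : X}
    (haS : a ∈ S) (haI : a ∈ I) (hbS : b ∈ S) (hbI : b ∈ I)
    (hcS : c ∈ S) (hcI : c ∈ I) (hab : a ≠ b) (hac : a ≠ c) (hbc : b ≠ c) : False := by
  classical
  have hIofabc : ∀ z, z ∈ ({a, b, c} : Set X) → z ∈ I := by
    rintro z (rfl|rfl|rfl) <;> assumption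
  by_cases hd : ∃ d ∈ S, d ∉ ({a, b, c} : Set X)
  · obtain ⟨f1, f2, f3, f4, f5, f6, f7, f8, f9, f10, f11, f12⟩ := zmod4_facts
    obtain ⟨d, hdS, hdnot⟩ := hd
    have hda : d ≠ a := fun h => hdnot (Or.inl h)
    have hdb : d ≠ b := fun h => hdnot (Or.inr (Or.inl h))
    have hdc : d ≠ c := fun h => hdnot (Or.inr (Or.inr h))
    set F4 : Finset X := insert d (insert a (insert b ({c} : Finset X))) with hF4
    have hF4c : (↑F4 : Set X) = {d, a, b, c} := by simp [hF4]
    have hF4sub : ↑F4 ⊆ S := by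
      rw [hF4c]
      rintro z (rfl|rfl|rfl|rfl) <;> assumption
    have hF4card : F4.card = 4 := by
      rw [hF4]
      rw [Finset.card_insert_of_notMem (by simp [hda, hdb, hdc]),
        Finset.card_insert_of_notMem (by simp [hab, hac]),
        Finset.card_insert_of_notMem (by simp [hbc]), Finset.card_singleton]
    obtain ⟨y, N, hDS, hrS⟩ := cyclicSet_decomp hS.1 F4 hF4sub hF4card (by omega)
    have hdR : d ∈ Set.range y := by rw [hrS, hF4c]; exact Or.inl rfl
    obtain ⟨δ, hδ⟩ := hdR
    have hothers : ∀ k : ZMod 4, k ≠ δ → y k ∈ ({a, b, c} : Set X) := by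
      intro k hk
      have hmem : y k ∈ (↑F4 : Set X) := by rw [← hrS]; exact ⟨k, rfl⟩
      rw [hF4c] at hmem
      rcases hmem with h|h
      · exact absurd (hDS.inj (h.trans hδ.symm)) hk
      · exact h
    obtain ⟨hQ, hm1, hm3⟩ := quad_seppair hDS δ
    have hcp : CutPair (y δ) (y (δ+2)) :=
      cutPair_of_cuts hnc (hDS.inj.ne (f1 δ)) ⟨_, _, hQ⟩
    exact hI.2 (y δ) (y (δ+2)) hcp (y (δ+1)) (hIofabc _ (hothers (δ+1) (f4 δ)))
      (y (δ+3)) (hIofabc _ (hothers (δ+3) (f6 δ)))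
      ⟨_, _, hQ, Set.singleton_subset_iff.2 hm1, Set.singleton_subset_iff.2 hm3⟩
  · push_neg at hd
    have hSeq : S = ({a, b, c} : Set X) := by
      apply Subset.antisymm hd
      rintro z (rfl|rfl|rfl) <;> assumption
    have hSsub : S ⊆ I := by
      rw [hSeq]
      exact hIofabc
    obtain ⟨t, htI, htS⟩ := Set.exists_of_ssubset ⟨hSsub, fun h => hne (Subset.antisymm hSsub h)⟩
    set F3 : Finset X := insert a (insert b ({c} : Finset X)) with hF3
    have hF3c : (↑F3 : Set X) = {a, b, c} := by simp [hF3]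
    have hF3sub : ↑F3 ⊆ S := by
      rw [hF3c, hSeq]
    have hF3card : F3.card = 3 := by
      rw [hF3]
      rw [Finset.card_insert_of_notMem (by simp [hab, hac]),
        Finset.card_insert_of_notMem (by simp [hbc]), Finset.card_singleton]
    obtain ⟨z3, M3, hD3, hr3⟩ := cyclicSet_decomp hS.1 F3 hF3sub hF3card (by omega)
    have htcov : t ∈ ⋃ i, M3 i := hD3.cover ▸ trivial
    obtain ⟨i, hti⟩ := Set.mem_iUnion.1 htcov
    have htR : t ∉ Set.range z3 := by
      rw [hr3, hF3c, ← hSeq]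
      exact htS
    have htio : t ∈ M3 i \ {z3 i, z3 (i+1)} := by
      refine ⟨hti, ?_⟩
      rintro (h|h)
      · exact htR ⟨i, h.symm⟩
      · exact htR ⟨i+1, h.symm⟩
    have hsp := tri_seppair hD3 i
    have hv : z3 (i+2) ∈ (M3 i)ᶜ := by
      intro h
      rcases hD3.mem_piece_iff.1 h with h'|h'
      · exact zmod3_facts.2.1 i h'
      · exact zmod3_facts.2.2 i h'
    have hcp : CutPair (z3 i) (z3 (i+1)) :=
      cutPair_of_cuts hnc (hD3.inj.ne (zmod3_facts.1 i)) ⟨_, _, hsp⟩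
    have hzI : z3 (i+2) ∈ I := by
      apply hIofabc
      rw [← hF3c, ← hr3]
      exact ⟨i+2, rfl⟩
    exact hI.2 (z3 i) (z3 (i+1)) hcp t htI (z3 (i+2)) hzI
      ⟨_, _, hsp, Set.singleton_subset_iff.2 htio, Set.singleton_subset_iff.2 hv⟩

/-- The pair lemma for a necklace and an inseparable set. -/
lemma NI_pair (hnc : ∀ p : X, ¬CutPoint p) {S I : Set X}
    (hS : Necklace S) (hI : InsepSet I) {a b : X} (hab : a ≠ b)
    (haS : a ∈ S) (haI : a ∈ I) (hbS : b ∈ S) (hbI : b ∈ I) : InsepCutPair a b :=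
  ⟨cyclicSet_pair hnc hS.1 haS hbS hab,
    insep_pair_of hab (fun c d hcd => hI.2 c d hcd a haI b hbI)⟩

/-- Two distinct maximal inseparable sets: the cross-separation argument. -/
lemma MM_cross {S T : Set X} (hS : MaxInsep S) (hT : MaxInsep T) (hne : S ≠ T)
    (hw : ∀ c' d' : X, CutPair c' d' → ∀ U V : Set X,
      SepPair ({c', d'} : Set X) U V → ∃ w, w ∈ S ∩ T ∧ w ∉ ({c', d'} : Set X)) :
    False := by
  have hun : InsepSet (S ∪ T) := by
    refine ⟨hS.1.1.mono subset_union_left, ?_⟩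
    rintro c' d' hcd u hu v hv ⟨U, V, hsp, hU, hV⟩
    rcases hu with hu|hu <;> rcases hv with hv|hv
    · exact hS.1.2 c' d' hcd u hu v hv ⟨U, V, hsp, hU, hV⟩
    · obtain ⟨w, hwST, hwC⟩ := hw c' d' hcd U V hsp
      have hwUV : w ∈ U ∪ V := by rw [hsp.2.2.2.1]; exact hwC
      rcases hwUV with hw'|hw'
      · exact hT.1.2 c' d' hcd w hwST.2 v hv
          ⟨U, V, hsp, Set.singleton_subset_iff.2 hw', hV⟩
      · exact hS.1.2 c' d' hcd u hu w hwST.1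
          ⟨U, V, hsp, hU, Set.singleton_subset_iff.2 hw'⟩
    · obtain ⟨w, hwST, hwC⟩ := hw c' d' hcd U V hsp
      have hwUV : w ∈ U ∪ V := by rw [hsp.2.2.2.1]; exact hwC
      rcases hwUV with hw'|hw'
      · exact hS.1.2 c' d' hcd w hwST.1 v hv
          ⟨U, V, hsp, Set.singleton_subset_iff.2 hw', hV⟩
      · exact hT.1.2 c' d' hcd u hu w hwST.2
          ⟨U, V, hsp, hU, Set.singleton_subset_iff.2 hw'⟩
    · exact hT.1.2 c' d' hcd u hu v hv ⟨U, V, hsp, hU, hV⟩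
  exact hne ((hS.2 _ hun subset_union_left).symm.trans (hT.2 _ hun subset_union_right))

lemma MM_triple {S T : Set X} (hS : MaxInsep S) (hT : MaxInsep T) (hne : S ≠ T)
    {a b c : X} (haS : a ∈ S) (haT : a ∈ T) (hbS : b ∈ S) (hbT : b ∈ T)
    (hcS : c ∈ S) (hcT : c ∈ T) (hab : a ≠ b) (hac : a ≠ c) (hbc : b ≠ c) : False := by
  apply MM_cross hS hT hne
  intro c' d' _ U V _
  obtain ⟨w, hw1, hw2⟩ := pick_avoid (p := c') (q := d') hab hac hbc
  refine ⟨w, ?_, hw2⟩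
  rcases hw1 with rfl|rfl|rfl
  · exact ⟨haS, haT⟩
  · exact ⟨hbS, hbT⟩
  · exact ⟨hcS, hcT⟩

lemma MM_pair (hnc : ∀ p : X, ¬CutPoint p) {S T : Set X}
    (hS : MaxInsep S) (hT : MaxInsep T) (hne : S ≠ T) {a b : X} (hab : a ≠ b)
    (haS : a ∈ S) (hbS : b ∈ S) (hint : S ∩ T = {a, b}) : InsepCutPair a b := by
  have hcuts : Cuts ({a, b} : Set X) := by
    by_contra hnc2
    apply MM_cross hS hT hne
    intro c' d' hcd U V hsp
    have hex : ∃ w, w ∈ ({a, b} : Set X) ∧ w ∉ ({c', d'} : Set X) := by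
      by_contra hno
      push_neg at hno
      have haP : a ∈ ({c', d'} : Set X) := hno a (Or.inl rfl)
      have hbP : b ∈ ({c', d'} : Set X) := hno b (Or.inr rfl)
      have heq := pair_eq_of_mem hab haP hbP
      exact hnc2 (heq ▸ ⟨U, V, hsp⟩)
    obtain ⟨w, hw1, hw2⟩ := hex
    exact ⟨w, hint ▸ hw1, hw2⟩
  refine ⟨⟨hab, hnc a, hnc b, hcuts⟩, insep_pair_of hab ?_⟩
  intro c d hcd
  have hbT : b ∈ S := hbS
  exact hS.1.2 c d hcd a haS b hbS

theorem stmt11' {X' : Type*} [MetricSpace X'] [CompactSpace X'] [ConnectedSpace X']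
    (hnc : ∀ p : X', ¬CutPoint p)
    (S T' : Set X') (hS : InR S) (hT : InR T') (hne : S ≠ T') :
    (∀ a ∈ S ∩ T', ∀ b ∈ S ∩ T', ∀ c ∈ S ∩ T', a = b ∨ a = c ∨ b = c) ∧
    (∀ a b : X', a ≠ b → S ∩ T' = {a, b} → InsepCutPair a b) := by
  constructor
  · rintro a ⟨haS, haT⟩ b ⟨hbS, hbT⟩ c ⟨hcS, hcT⟩
    by_contra hcon
    push_neg at hcon
    obtain ⟨hab, hac, hbc⟩ := hcon
    rcases hS with hSn | hSm | ⟨p, q, hicp, rfl⟩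
    · rcases hT with hTn | hTm | ⟨p, q, hicp, rfl⟩
      · exact NN_triple hnc hSn hTn hne haS haT hbS hbT hcS hcT hab hac hbc
      · exact NI_triple hnc hSn hTm.1 hne haS haT hbS hbT hcS hcT hab hac hbc
      · exact three_not_in_pair hab hac hbc haT hbT hcT
    · rcases hT with hTn | hTm | ⟨p, q, hicp, rfl⟩
      · exact NI_triple hnc hTn hSm.1 (Ne.symm hne) haT haS hbT hbS hcT hcS hab hac hbc
      · exact MM_triple hSm hTm hne haS haT hbS hbT hcS hcT hab hac hbc
      · exact three_not_in_pair hab hac hbc haT hbT hcT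
    · exact three_not_in_pair hab hac hbc haS hbS hcS
  · intro a b hab hint
    have haST : a ∈ S ∩ T' := hint.symm ▸ (Or.inl rfl : a ∈ ({a,b} : Set X'))
    have hbST : b ∈ S ∩ T' := hint.symm ▸ (Or.inr rfl : b ∈ ({a,b} : Set X'))
    have hicp_case : ∀ p q : X', InsepCutPair p q → a ∈ ({p, q} : Set X') →
        b ∈ ({p, q} : Set X') → InsepCutPair a b := by
      intro p q hicp hap hbp
      rcases hap with rfl|rfl <;> rcases hbp with rfl|rfl
      · exact absurd rfl hab
      · exact hicp
      · exact hicp.symm'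
      · exact absurd rfl hab
    rcases hS with hSn | hSm | ⟨p, q, hicp, rfl⟩
    · rcases hT with hTn | hTm | ⟨p, q, hicp, rfl⟩
      · exact NN_pair hnc hSn hTn hab haST.1 haST.2 hbST.1 hbST.2 hint
      · exact NI_pair hnc hSn hTm.1 hab haST.1 haST.2 hbST.1 hbST.2
      · exact hicp_case p q hicp haST.2 hbST.2
    · rcases hT with hTn | hTm | ⟨p, q, hicp, rfl⟩
      · exact NI_pair hnc hTn hSm.1 hab haST.2 haST.1 hbST.2 hbST.1
      · exact MM_pair hnc hSm hTm hne hab haST.1 hbST.1 hint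
      · exact hicp_case p q hicp haST.2 hbST.2
    · exact hicp_case p q hicp haST.1 hbST.1

end Final

theorem stmt11 {X : Type*} [MetricSpace X] [CompactSpace X] [ConnectedSpace X]
    (hnc : ∀ p : X, ¬CutPoint p)
    (S T' : Set X) (hS : InR S) (hT : InR T') (hne : S ≠ T') :
    (∀ a ∈ S ∩ T', ∀ b ∈ S ∩ T', ∀ c ∈ S ∩ T', a = b ∨ a = c ∨ b = c) ∧
    (∀ a b : X, a ≠ b → S ∩ T' = {a, b} → InsepCutPair a b) :=
  stmt11' hnc S T' hS hT hne
end
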